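/- arXiv:1012.5039 — 7 statements merged into one kernel-verified Lean document; each statement's English description precedes it below -/
import Mathlib

section
/- Let m be a positive integer and let μ be the Haar probability measure on the real orthogonal group O(m). Then for every pair of indices i, j, the fourth moment of the (i,j) entry of a Haar-distributed orthogonal matrix equals 3/(m(m+2)): ∫_{O(m)} (Q i j)^4 dμ(Q) = 3/(m(m+2)). -/
open MeasureTheory Matrix

/-! The `j`-th column `x = Q eⱼ` of a Haar orthogonal matrix is a random unit vector whose law is
invariant under every orthogonal map, in particular under Householder reflections in coordinate
planes. The reflection swapping two coordinates shows that all `E[x_l⁴]` agree; the reflections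
in `e_l ± 2 e_l'` send `x_l` to `(3 x_l ∓ 4 x_l') / 5`, and averaging the two expansions of
`E[x_l⁴]` gives `E[x_l⁴] = 3 E[x_l² x_l'²]` for `l ≠ l'`. Expanding `E[(∑ x_l²)²] = 1` then gives
`m (m + 2) E[x_i⁴] / 3 = 1`. -/

namespace Matrix

variable {n : Type*} [Fintype n] [DecidableEq n]

noncomputable def householder (v : n → ℝ) : Matrix n n ℝ :=
  1 - (2 / (v ⬝ᵥ v)) • vecMulVec v v

theorem transpose_householder (v : n → ℝ) : (householder v)ᵀ = householder v := by
  simp [householder]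

theorem householder_mul_self {v : n → ℝ} (hv : v ⬝ᵥ v ≠ 0) :
    householder v * householder v = 1 := by
  have hsq : vecMulVec v v * vecMulVec v v = (v ⬝ᵥ v) • vecMulVec v v := by
    rw [vecMulVec_mul_vecMulVec, vecMulVec_smul]
  have hcoeff : 2 / (v ⬝ᵥ v) * (2 / (v ⬝ᵥ v) * (v ⬝ᵥ v)) = 2 * (2 / (v ⬝ᵥ v)) := by
    field_simp
  simp only [householder, sub_mul, mul_sub, one_mul, mul_one, Matrix.smul_mul, Matrix.mul_smul,
    hsq, smul_smul, hcoeff]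
  module

theorem transpose_householder_mul_self {v : n → ℝ} (hv : v ⬝ᵥ v ≠ 0) :
    (householder v)ᵀ * householder v = 1 := by
  rw [transpose_householder, householder_mul_self hv]

theorem householder_mulVec (v x : n → ℝ) :
    householder v *ᵥ x = x - (2 * (v ⬝ᵥ x) / (v ⬝ᵥ v)) • v := by
  rw [householder, sub_mulVec, one_mulVec, smul_mulVec, vecMulVec_mulVec]
  ext l
  simp only [op_smul_eq_smul, Pi.sub_apply, Pi.smul_apply, smul_eq_mul, sub_right_inj]
  ring

end Matrix

section OrthogonallyInvariantUnitVector

variable {n : Type*} [Fintype n]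

theorem isCompact_setOf_dotProduct_self_eq_one : IsCompact {x : n → ℝ | x ⬝ᵥ x = 1} := by
  refine Metric.isCompact_of_isClosed_isBounded (isClosed_eq (by fun_prop) continuous_const)
    ((Metric.isBounded_closedBall (x := 0) (r := 1)).subset fun x (hx : x ⬝ᵥ x = 1) => ?_)
  rw [mem_closedBall_zero_iff, pi_norm_le_iff_of_nonneg zero_le_one]
  intro l
  rw [Real.norm_eq_abs, ← sq_le_one_iff_abs_le_one, ← hx, sq]
  exact Finset.single_le_sum (f := fun l => x l * x l) (fun l _ => mul_self_nonneg (x l))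
    (Finset.mem_univ l)

variable {ν : Measure (n → ℝ)}

theorem Continuous.integrable_of_ae_dotProduct_self_eq_one [IsFiniteMeasure ν]
    (hsphere : ∀ᵐ x ∂ν, x ⬝ᵥ x = 1) {f : (n → ℝ) → ℝ} (hf : Continuous f) :
    Integrable f ν := by
  rw [← Measure.restrict_eq_self_of_ae_mem hsphere]
  exact hf.continuousOn.integrableOn_compact isCompact_setOf_dotProduct_self_eq_one

theorem sum_sum_integral_sq_mul_sq [IsProbabilityMeasure ν] (hsphere : ∀ᵐ x ∂ν, x ⬝ᵥ x = 1) :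
    ∑ l, ∑ l', ∫ x, x l ^ 2 * x l' ^ 2 ∂ν = 1 := by
  have hint : ∀ l l' : n, Integrable (fun x => x l ^ 2 * x l' ^ 2) ν :=
    fun l l' => Continuous.integrable_of_ae_dotProduct_self_eq_one hsphere (by fun_prop)
  calc ∑ l, ∑ l', ∫ x, x l ^ 2 * x l' ^ 2 ∂ν
      = ∫ x, ∑ l, ∑ l', x l ^ 2 * x l' ^ 2 ∂ν := by
        rw [integral_finsetSum _ fun l _ => integrable_finsetSum _ fun l' _ => hint l l']
        exact Finset.sum_congr rfl fun l _ =>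
          (integral_finsetSum _ fun l' _ => hint l l').symm
    _ = ∫ x, (x ⬝ᵥ x) * (x ⬝ᵥ x) ∂ν := by simp_rw [dotProduct, Finset.sum_mul_sum, sq]
    _ = ∫ _, 1 ∂ν := integral_congr_ae (hsphere.mono fun x hx => by simp [hx])
    _ = 1 := by simp

variable [DecidableEq n] (hinv : ∀ P : Matrix n n ℝ, Pᵀ * P = 1 → ν.map (P *ᵥ ·) = ν)
include hinv

theorem integral_comp_householder_mulVec {v : n → ℝ} (hv : v ⬝ᵥ v ≠ 0) {f : (n → ℝ) → ℝ}
    (hf : Continuous f) :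
    ∫ x, f (x - (2 * (v ⬝ᵥ x) / (v ⬝ᵥ v)) • v) ∂ν = ∫ x, f x ∂ν := by
  have hmeas : Measurable (householder v *ᵥ ·) :=
    (continuous_const.matrix_mulVec continuous_id).measurable
  conv_rhs => rw [← hinv _ (transpose_householder_mul_self hv)]
  rw [integral_map hmeas.aemeasurable hf.aestronglyMeasurable]
  simp only [householder_mulVec]

theorem integral_comp_reflect_coord {l l' : n} (hll' : l ≠ l') {a b : ℝ} (hab : a ^ 2 + b ^ 2 ≠ 0)
    {g : ℝ → ℝ} (hg : Continuous g) :
    ∫ x, g (x l - 2 * a * (a * x l + b * x l') / (a ^ 2 + b ^ 2)) ∂ν = ∫ x, g (x l) ∂ν := by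
  set v : n → ℝ := Pi.single l a + Pi.single l' b
  have hvv : v ⬝ᵥ v = a ^ 2 + b ^ 2 := by
    simp only [v, dotProduct_add, dotProduct_single, Pi.add_apply, Pi.single_eq_same,
      Pi.single_eq_of_ne hll', Pi.single_eq_of_ne hll'.symm, add_zero, zero_add]
    ring
  rw [← integral_comp_householder_mulVec hinv (hvv ▸ hab) (f := fun x => g (x l)) (by fun_prop)]
  congr 1 with x
  simp only [v, add_dotProduct, single_dotProduct, hvv, Pi.sub_apply, Pi.smul_apply,
    Pi.add_apply, Pi.single_eq_same, Pi.single_eq_of_ne hll', smul_eq_mul, add_zero]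
  congr 1
  ring

theorem integral_coord_pow_four_eq (l l' : n) :
    ∫ x, x l ^ 4 ∂ν = ∫ x, x l' ^ 4 ∂ν := by
  rcases eq_or_ne l l' with rfl | hll'
  · rfl
  rw [← integral_comp_reflect_coord hinv hll' (a := 1) (b := -1) (by norm_num) (g := (· ^ 4))
    (by fun_prop)]
  congr 1 with x
  ring

theorem three_mul_integral_sq_mul_sq_of_ne [IsFiniteMeasure ν] (hsphere : ∀ᵐ x ∂ν, x ⬝ᵥ x = 1)
    {l l' : n} (hll' : l ≠ l') :
    3 * ∫ x, x l ^ 2 * x l' ^ 2 ∂ν = ∫ x, x l ^ 4 ∂ν := by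
  have hint : ∀ {f : (n → ℝ) → ℝ}, Continuous f → Integrable f ν :=
    fun hf => hf.integrable_of_ae_dotProduct_self_eq_one hsphere
  have hminus : ∫ x, ((3 * x l - 4 * x l') / 5) ^ 4 ∂ν = ∫ x, x l ^ 4 ∂ν := by
    rw [← integral_comp_reflect_coord hinv hll' (a := 1) (b := 2) (by norm_num) (g := (· ^ 4))
      (by fun_prop)]
    congr 1 with x
    ring
  have hplus : ∫ x, ((3 * x l + 4 * x l') / 5) ^ 4 ∂ν = ∫ x, x l ^ 4 ∂ν := by
    rw [← integral_comp_reflect_coord hinv hll' (a := 1) (b := -2) (by norm_num) (g := (· ^ 4))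
      (by fun_prop)]
    congr 1 with x
    ring
  have hsum := calc
    2 * ∫ x, x l ^ 4 ∂ν
      = ∫ x, ((3 * x l - 4 * x l') / 5) ^ 4 ∂ν + ∫ x, ((3 * x l + 4 * x l') / 5) ^ 4 ∂ν := by
        rw [hminus, hplus, two_mul]
    _ = ∫ x, (162 / 625 * x l ^ 4 + 1728 / 625 * (x l ^ 2 * x l' ^ 2)
          + 512 / 625 * x l' ^ 4) ∂ν := by
        rw [← integral_add (hint (by fun_prop)) (hint (by fun_prop))]
        congr 1 with x
        ring
    _ = 162 / 625 * ∫ x, x l ^ 4 ∂ν + 1728 / 625 * ∫ x, x l ^ 2 * x l' ^ 2 ∂ν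
          + 512 / 625 * ∫ x, x l' ^ 4 ∂ν := by
        rw [integral_add (hint (by fun_prop)) (hint (by fun_prop)),
          integral_add (hint (by fun_prop)) (hint (by fun_prop)), integral_const_mul,
          integral_const_mul, integral_const_mul]
  linarith [integral_coord_pow_four_eq hinv l' l]

theorem integral_coord_pow_four_of_orthogonally_invariant [IsProbabilityMeasure ν]
    (hsphere : ∀ᵐ x ∂ν, x ⬝ᵥ x = 1) (i : n) :
    ∫ x, x i ^ 4 ∂ν = 3 / (Fintype.card n * (Fintype.card n + 2)) := by
  have hmoment : ∀ l l', ∫ x, x l ^ 2 * x l' ^ 2 ∂ν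
      = (2 * (if l = l' then 1 else 0) + 1) * (∫ x, x i ^ 4 ∂ν) / 3 := by
    intro l l'
    rw [← integral_coord_pow_four_eq hinv l i]
    split_ifs with h
    · subst h
      ring_nf
    · linarith [three_mul_integral_sq_mul_sq_of_ne hinv hsphere h]
  have hnorm := sum_sum_integral_sq_mul_sq hsphere
  simp only [hmoment, ← Finset.sum_div, ← Finset.sum_mul, Finset.sum_add_distrib,
    ← Finset.mul_sum, Finset.sum_ite_eq, Finset.mem_univ, if_true, Finset.sum_const,
    Finset.card_univ, nsmul_eq_mul] at hnorm
  have hkey : (∫ x, x i ^ 4 ∂ν) * (Fintype.card n * (Fintype.card n + 2)) = 3 := by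
    linear_combination 3 * hnorm
  exact eq_div_of_mul_eq (right_ne_zero_of_mul (hkey ▸ three_ne_zero)) hkey

end OrthogonallyInvariantUnitVector

theorem map_mulVec_map_col {n p : Type*} [Fintype n] {μ : Measure (n → p → ℝ)}
    {P : Matrix n n ℝ} (hP : μ.map (fun Q => Matrix.of.symm (P * Matrix.of Q)) = μ) (j : p) :
    (μ.map (fun Q l => Q l j)).map (P *ᵥ ·) = μ.map (fun Q l => Q l j) := by
  have hmul : Measurable fun Q : n → p → ℝ => Matrix.of.symm (P * Matrix.of Q) := by
    refine measurable_pi_lambda _ fun a => measurable_pi_lambda _ fun b => ?_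
    simp only [of_symm_apply, mul_apply, of_apply]
    fun_prop
  rw [Measure.map_map (by fun_prop) (by fun_prop)]
  conv_rhs => rw [← hP, Measure.map_map (by fun_prop) hmul]
  rfl

theorem haar_orthogonal_fourth_moment_general (m : ℕ)
    (μ : Measure (Fin m → Fin m → ℝ)) [IsProbabilityMeasure μ]
    (hsupp : μ {Q | (Matrix.of Q)ᵀ * Matrix.of Q = 1} = 1)
    (hinv : ∀ P : Matrix (Fin m) (Fin m) ℝ, Pᵀ * P = 1 →
      μ.map (fun Q => Matrix.of.symm (P * Matrix.of Q)) = μ)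
    (i j : Fin m) :
    ∫ Q, (Q i j) ^ 4 ∂μ = 3 / ((m : ℝ) * ((m : ℝ) + 2)) := by
  have hcol : Measurable fun (Q : Fin m → Fin m → ℝ) l => Q l j := by fun_prop
  have hmeas : MeasurableSet {Q : Fin m → Fin m → ℝ | (Matrix.of Q)ᵀ * Matrix.of Q = 1} :=
    (isClosed_eq (by fun_prop) continuous_const).measurableSet
  have horth : ∀ᵐ Q ∂μ, (Matrix.of Q)ᵀ * Matrix.of Q = 1 := by
    rw [ae_iff_measure_eq hmeas.nullMeasurableSet, hsupp, measure_univ]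
  have hsphere : ∀ᵐ x ∂μ.map fun Q l => Q l j, x ⬝ᵥ x = 1 := by
    rw [ae_map_iff hcol.aemeasurable (isClosed_eq (by fun_prop) continuous_const).measurableSet]
    exact horth.mono fun Q hQ => by simpa [mul_apply, dotProduct] using congr_fun₂ hQ j j
  have := Measure.isProbabilityMeasure_map (μ := μ) hcol.aemeasurable
  calc ∫ Q, Q i j ^ 4 ∂μ = ∫ x, x i ^ 4 ∂μ.map fun Q l => Q l j :=
        (integral_map hcol.aemeasurable
          (by fun_prop : Continuous fun x : Fin m → ℝ => x i ^ 4).aestronglyMeasurable).symm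
    _ = 3 / ((m : ℝ) * ((m : ℝ) + 2)) := by
      simpa using integral_coord_pow_four_of_orthogonally_invariant
        (fun P hP => map_mulVec_map_col (hinv P hP) j) hsphere i

/-- For the Haar probability measure `μ` on the real orthogonal
group `O(m)`, the fourth moment of the `(i,j)` entry equals `3/(m(m+2))`. -/
theorem haar_orthogonal_fourth_moment (m : ℕ) (hm : 0 < m)
    (μ : Measure (Fin m → Fin m → ℝ)) [IsProbabilityMeasure μ]
    (hsupp : μ {Q | (Matrix.of Q)ᵀ * Matrix.of Q = 1} = 1)
    (hinv : ∀ P : Matrix (Fin m) (Fin m) ℝ, Pᵀ * P = 1 →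
      μ.map (fun Q => Matrix.of.symm (P * Matrix.of Q)) = μ)
    (i j : Fin m) :
    ∫ Q, (Q i j) ^ 4 ∂μ = 3 / ((m : ℝ) * ((m : ℝ) + 2)) :=
  haar_orthogonal_fourth_moment_general m μ hsupp hinv i j
end

section
/- Let m ≥ 2 be an integer and let μ be the Haar probability measure on the real orthogonal group O(m). Then for any row index i and any two distinct column indices j ≠ k, ∫_{O(m)} (Q i j)^2 (Q i k)^2 dμ(Q) = 1/(m(m+2)). -/
open MeasureTheory Matrix Finset

namespace HaarAux

variable {m : ℕ}

lemma meas_entry (a b : Fin m) : Measurable fun Q : Fin m → Fin m → ℝ => Q a b :=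
  (measurable_pi_apply b).comp (measurable_pi_apply a)

lemma meas_m4 (a1 b1 a2 b2 a3 b3 a4 b4 : Fin m) :
    Measurable fun Q : Fin m → Fin m → ℝ => Q a1 b1 * Q a2 b2 * (Q a3 b3 * Q a4 b4) :=
  ((meas_entry a1 b1).mul (meas_entry a2 b2)).mul ((meas_entry a3 b3).mul (meas_entry a4 b4))

variable (μ : Measure (Fin m → Fin m → ℝ)) [IsProbabilityMeasure μ]

lemma ae_orth (hsupp : μ {Q | (Matrix.of Q)ᵀ * Matrix.of Q = 1} = 1) :
    ∀ᵐ Q ∂μ, (Matrix.of Q)ᵀ * Matrix.of Q = 1 := by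
  have hcont : Continuous fun Q : Fin m → Fin m → ℝ => (Matrix.of Q)ᵀ * Matrix.of Q :=
    (continuous_id.matrix_transpose).matrix_mul continuous_id
  have hmeas : MeasurableSet {Q : Fin m → Fin m → ℝ | (Matrix.of Q)ᵀ * Matrix.of Q = 1} :=
    (isClosed_singleton.preimage hcont).measurableSet
  rw [ae_iff]
  have h : {Q : Fin m → Fin m → ℝ | ¬ (Matrix.of Q)ᵀ * Matrix.of Q = 1}
      = {Q : Fin m → Fin m → ℝ | (Matrix.of Q)ᵀ * Matrix.of Q = 1}ᶜ := rfl
  rw [h, measure_compl hmeas (measure_ne_top μ _), hsupp, measure_univ]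
  simp

lemma col_sum {Q : Fin m → Fin m → ℝ} (hQ : (Matrix.of Q)ᵀ * Matrix.of Q = 1)
    (b b' : Fin m) : ∑ a, Q a b * Q a b' = if b = b' then 1 else 0 := by
  have := congrArg (fun M => M b b') hQ
  simpa [Matrix.mul_apply, Matrix.one_apply] using this

lemma entry_bound {Q : Fin m → Fin m → ℝ} (hQ : (Matrix.of Q)ᵀ * Matrix.of Q = 1)
    (a b : Fin m) : |Q a b| ≤ 1 := by
  have h1 : ∑ c, Q c b * Q c b = 1 := by simpa using col_sum hQ b b
  have h2 : Q a b * Q a b ≤ 1 := by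
    calc Q a b * Q a b ≤ ∑ c, Q c b * Q c b :=
          Finset.single_le_sum (fun c _ => mul_self_nonneg (Q c b)) (Finset.mem_univ a)
    _ = 1 := h1
  nlinarith [abs_nonneg (Q a b), abs_mul_abs_self (Q a b)]

lemma int_m4 (hsupp : μ {Q | (Matrix.of Q)ᵀ * Matrix.of Q = 1} = 1)
    (a1 b1 a2 b2 a3 b3 a4 b4 : Fin m) :
    Integrable (fun Q : Fin m → Fin m → ℝ => Q a1 b1 * Q a2 b2 * (Q a3 b3 * Q a4 b4)) μ := by
  refine Integrable.mono' (integrable_const 1)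
    (meas_m4 a1 b1 a2 b2 a3 b3 a4 b4).aestronglyMeasurable ?_
  filter_upwards [ae_orth μ hsupp] with Q hQ
  have e1 := entry_bound hQ a1 b1
  have e2 := entry_bound hQ a2 b2
  have e3 := entry_bound hQ a3 b3
  have e4 := entry_bound hQ a4 b4
  have habs : |Q a1 b1 * Q a2 b2 * (Q a3 b3 * Q a4 b4)|
      = |Q a1 b1| * |Q a2 b2| * (|Q a3 b3| * |Q a4 b4|) := by
    rw [abs_mul, abs_mul, abs_mul]
  rw [Real.norm_eq_abs, habs]
  calc |Q a1 b1| * |Q a2 b2| * (|Q a3 b3| * |Q a4 b4|) ≤ 1 * 1 * (1 * 1) := by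
        gcongr <;> first | exact abs_nonneg _ | assumption
  _ = 1 := by norm_num


lemma transfer' (hinv : ∀ P : Matrix (Fin m) (Fin m) ℝ, Pᵀ * P = 1 →
      μ.map (fun Q => Matrix.of.symm (P * Matrix.of Q)) = μ)
    (P : Matrix (Fin m) (Fin m) ℝ) (hP : Pᵀ * P = 1)
    {f g : (Fin m → Fin m → ℝ) → ℝ} (hf : Measurable f) (hfi : Integrable f μ)
    (hg : ∀ Q, f (fun a b => ∑ c, P a c * Q c b) = g Q) :
    (∫ Q, f Q ∂μ = ∫ Q, g Q ∂μ) ∧ Integrable g μ := by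
  have hTe : ∀ Q : Fin m → Fin m → ℝ,
      (Matrix.of.symm (P * Matrix.of Q)) = fun a b => ∑ c, P a c * Q c b := by
    intro Q; funext a b; simp [Matrix.mul_apply]
  have hTm : Measurable fun Q : Fin m → Fin m → ℝ => Matrix.of.symm (P * Matrix.of Q) := by
    apply measurable_pi_lambda; intro a; apply measurable_pi_lambda; intro b
    have h : (fun Q : Fin m → Fin m → ℝ => Matrix.of.symm (P * Matrix.of Q) a b)
        = fun Q => ∑ c, P a c * Q c b := by
      funext Q; rw [hTe]
    rw [h]
    exact Finset.measurable_sum _ fun c _ => (meas_entry c b).const_mul _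
  have hmap := hinv P hP
  have hasm : AEStronglyMeasurable f
      (μ.map fun Q : Fin m → Fin m → ℝ => Matrix.of.symm (P * Matrix.of Q)) := by
    rw [hmap]; exact hf.aestronglyMeasurable
  have hint : Integrable ((f ∘ fun Q : Fin m → Fin m → ℝ => Matrix.of.symm (P * Matrix.of Q))) μ :=
    (integrable_map_measure hasm hTm.aemeasurable).mp (by rw [hmap]; exact hfi)
  have hfg : (f ∘ fun Q : Fin m → Fin m → ℝ => Matrix.of.symm (P * Matrix.of Q)) = g := by
    funext Q; rw [Function.comp_apply, hTe, hg]
  constructor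
  · conv_lhs => rw [← hmap]
    rw [integral_map hTm.aemeasurable hasm]
    exact integral_congr_ae (Filter.Eventually.of_forall fun Q => by
      show f (Matrix.of.symm (P * Matrix.of Q)) = g Q
      rw [hTe, hg])
  · exact hfg ▸ hint

lemma perm_orth (σ : Equiv.Perm (Fin m)) :
    (Matrix.of (fun a c : Fin m => if c = σ a then (1:ℝ) else 0))ᵀ *
      Matrix.of (fun a c : Fin m => if c = σ a then (1:ℝ) else 0) = 1 := by
  ext c c'
  simp only [Matrix.mul_apply, Matrix.transpose_apply, Matrix.of_apply, Matrix.one_apply]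
  rw [Equiv.sum_comp σ (fun x => (if c = x then (1:ℝ) else 0) * (if c' = x then (1:ℝ) else 0))]
  simp only [boole_mul]
  rw [Finset.sum_ite_eq]
  by_cases h : c = c'
  · simp [h]
  · simp [h, Ne.symm h]

lemma perm_row (σ : Equiv.Perm (Fin m)) (Q : Fin m → Fin m → ℝ) (a b : Fin m) :
    ∑ c, (if c = σ a then (1:ℝ) else 0) * Q c b = Q (σ a) b := by
  simp [ite_mul, Finset.sum_ite_eq']

lemma perm_m4 (hsupp : μ {Q | (Matrix.of Q)ᵀ * Matrix.of Q = 1} = 1)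
    (hinv : ∀ P : Matrix (Fin m) (Fin m) ℝ, Pᵀ * P = 1 →
      μ.map (fun Q => Matrix.of.symm (P * Matrix.of Q)) = μ)
    (σ : Equiv.Perm (Fin m)) (a1 b1 a2 b2 a3 b3 a4 b4 : Fin m) :
    ∫ Q, Q a1 b1 * Q a2 b2 * (Q a3 b3 * Q a4 b4) ∂μ
      = ∫ Q, Q (σ a1) b1 * Q (σ a2) b2 * (Q (σ a3) b3 * Q (σ a4) b4) ∂μ :=
  (transfer' μ hinv (Matrix.of fun a c => if c = σ a then (1:ℝ) else 0) (perm_orth σ)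
    (meas_m4 a1 b1 a2 b2 a3 b3 a4 b4) (int_m4 μ hsupp a1 b1 a2 b2 a3 b3 a4 b4)
    (fun Q => by simp only [Matrix.of_apply, perm_row])).1

lemma exists_perm_pair {α : Type*} [DecidableEq α] {a b c d : α}
    (hab : a ≠ b) (hcd : c ≠ d) : ∃ σ : Equiv.Perm α, σ a = c ∧ σ b = d := by
  set b' := Equiv.swap a c b with hb'
  have hb'c : b' ≠ c := by
    intro h
    have h2 : Equiv.swap a c b = Equiv.swap a c a := by
      rw [← hb', h, Equiv.swap_apply_left]
    exact hab ((Equiv.swap a c).injective h2.symm)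
  refine ⟨(Equiv.swap a c).trans (Equiv.swap b' d), ?_, ?_⟩
  · simp only [Equiv.trans_apply, Equiv.swap_apply_left]
    exact Equiv.swap_apply_of_ne_of_ne (Ne.symm hb'c) hcd
  · simp only [Equiv.trans_apply, ← hb', Equiv.swap_apply_left]


def rotM (r0 r1 : Fin m) (p q : ℝ) : Fin m → Fin m → ℝ := fun a c =>
  if a = r0 then (if c = r0 then p else if c = r1 then q else 0)
  else if a = r1 then (if c = r0 then -q else if c = r1 then p else 0)
  else if a = c then 1 else 0

lemma rotM_orth (r0 r1 : Fin m) (h01 : r0 ≠ r1) (p q : ℝ) (hpq : p ^ 2 + q ^ 2 = 1) :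
    (Matrix.of (rotM r0 r1 p q))ᵀ * Matrix.of (rotM r0 r1 p q) = 1 := by
  ext c c'
  simp only [Matrix.mul_apply, Matrix.transpose_apply, Matrix.of_apply, Matrix.one_apply]
  rw [← Finset.add_sum_erase _ _ (Finset.mem_univ r0),
      ← Finset.add_sum_erase _ _ (Finset.mem_erase.mpr ⟨Ne.symm h01, Finset.mem_univ r1⟩)]
  have hrest : ∑ a ∈ (Finset.univ.erase r0).erase r1, rotM r0 r1 p q a c * rotM r0 r1 p q a c'
      = ∑ a ∈ (Finset.univ.erase r0).erase r1,
          (if a = c then (if c = c' then (1:ℝ) else 0) else 0) := by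
    refine Finset.sum_congr rfl fun a ha => ?_
    have ha1 : a ≠ r1 := (Finset.mem_erase.mp ha).1
    have ha0 : a ≠ r0 := (Finset.mem_erase.mp (Finset.mem_erase.mp ha).2).1
    simp only [rotM, if_neg ha0, if_neg ha1]
    by_cases hac : a = c
    · subst hac
      by_cases hcc : a = c' <;> simp [hcc]
    · simp [hac]
  rw [hrest, Finset.sum_ite_eq' ((Finset.univ.erase r0).erase r1) c
      (fun _ => if c = c' then (1:ℝ) else 0)]
  clear hrest
  simp only [rotM, if_pos rfl, if_neg (Ne.symm h01), Finset.mem_erase, Finset.mem_univ,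
    and_true]
  by_cases hc0 : c = r0 <;> by_cases hc'0 : c' = r0 <;> by_cases hc1 : c = r1 <;>
    by_cases hc'1 : c' = r1 <;>
      simp_all [eq_comm] <;> first | ring1 | linear_combination hpq

lemma rotM_row0 (r0 r1 : Fin m) (h01 : r0 ≠ r1) (p q : ℝ) (Q : Fin m → Fin m → ℝ) (b : Fin m) :
    ∑ c, rotM r0 r1 p q r0 c * Q c b = p * Q r0 b + q * Q r1 b := by
  have hterm : ∀ c, rotM r0 r1 p q r0 c * Q c b
      = (if c = r0 then p * Q r0 b else 0) + (if c = r1 then q * Q r1 b else 0) := by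
    intro c
    simp only [rotM, if_pos rfl]
    by_cases h0 : c = r0
    · subst h0; simp [Ne.symm h01, h01]
    · by_cases h1 : c = r1
      · subst h1; simp [Ne.symm h01]
      · simp [h0, h1]
  simp only [hterm]
  rw [Finset.sum_add_distrib, Finset.sum_ite_eq' Finset.univ r0 (fun _ => p * Q r0 b),
    Finset.sum_ite_eq' Finset.univ r1 (fun _ => q * Q r1 b)]
  simp

end HaarAux

open HaarAux

/-- For the Haar probability measure `μ` on the real orthogonal
group `O(m)` with `m ≥ 2`, for any row `i` and distinct columns `j ≠ k`,
`∫ (Q i j)^2 (Q i k)^2 dμ = 1/(m(m+2))`. -/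
theorem haar_orthogonal_mixed_moment (m : ℕ) (hm : 2 ≤ m)
    (μ : Measure (Fin m → Fin m → ℝ)) [IsProbabilityMeasure μ]
    (hsupp : μ {Q | (Matrix.of Q)ᵀ * Matrix.of Q = 1} = 1)
    (hinv : ∀ P : Matrix (Fin m) (Fin m) ℝ, Pᵀ * P = 1 →
      μ.map (fun Q => Matrix.of.symm (P * Matrix.of Q)) = μ)
    (i j k : Fin m) (hjk : j ≠ k) :
    ∫ Q, (Q i j) ^ 2 * (Q i k) ^ 2 ∂μ = 1 / ((m : ℝ) * ((m : ℝ) + 2)) := by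
  classical
  have hg : (fun Q : Fin m → Fin m → ℝ => (Q i j) ^ 2 * (Q i k) ^ 2)
      = fun Q => Q i j * Q i j * (Q i k * Q i k) := by
    funext Q; ring
  rw [hg]
  set r0 : Fin m := ⟨0, by omega⟩ with hr0
  set r1 : Fin m := ⟨1, by omega⟩ with hr1
  have h01 : r0 ≠ r1 := by simp [hr0, hr1, Fin.ext_iff]
  set B := ∫ Q, Q i j * Q i j * (Q i k * Q i k) ∂μ with hB
  set D := ∫ Q, Q r0 j * Q r0 j * (Q r1 k * Q r1 k) ∂μ with hD
  set E := ∫ Q, Q r0 j * Q r0 k * (Q r1 j * Q r1 k) ∂μ with hE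
  -- row transfers
  have F1 : ∀ a : Fin m, ∫ Q, Q a j * Q a j * (Q a k * Q a k) ∂μ = B := by
    intro a
    have h := perm_m4 μ hsupp hinv (Equiv.swap a i) a j a j a k a k
    rw [hB]
    simpa [Equiv.swap_apply_left] using h
  have F2 : ∀ a a' : Fin m, a ≠ a' →
      ∫ Q, Q a j * Q a j * (Q a' k * Q a' k) ∂μ = D := by
    intro a a' haa'
    obtain ⟨σ, hσ0, hσ1⟩ := exists_perm_pair haa' h01
    have h := perm_m4 μ hsupp hinv σ a j a j a' k a' k
    rw [hσ0, hσ1] at h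
    rw [hD]
    exact h
  have F3 : ∀ a a' : Fin m, a ≠ a' →
      ∫ Q, Q a j * Q a k * (Q a' j * Q a' k) ∂μ = E := by
    intro a a' haa'
    obtain ⟨σ, hσ0, hσ1⟩ := exists_perm_pair haa' h01
    have h := perm_m4 μ hsupp hinv σ a j a k a' j a' k
    rw [hσ0, hσ1] at h
    rw [hE]
    exact h
  have F1' : ∀ a : Fin m, ∫ Q, Q a j * Q a k * (Q a j * Q a k) ∂μ = B := by
    intro a
    have hg2 : (fun Q : Fin m → Fin m → ℝ => Q a j * Q a k * (Q a j * Q a k))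
        = fun Q => Q a j * Q a j * (Q a k * Q a k) := by funext Q; ring
    rw [hg2]
    exact F1 a
  -- Equation 4
  have h4a : ∫ Q, (∑ a, Q a j * Q a j) * (∑ a', Q a' k * Q a' k) ∂μ = 1 := by
    have hae : (fun Q : Fin m → Fin m → ℝ =>
        (∑ a, Q a j * Q a j) * (∑ a', Q a' k * Q a' k)) =ᵐ[μ] fun _ => (1:ℝ) := by
      filter_upwards [ae_orth μ hsupp] with Q hQ
      rw [col_sum hQ j j, col_sum hQ k k]
      simp
    rw [integral_congr_ae hae]
    simp
  have h4b : ∫ Q, (∑ a, Q a j * Q a j) * (∑ a', Q a' k * Q a' k) ∂μ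
      = ∑ a : Fin m, ∑ a' : Fin m, ∫ Q, Q a j * Q a j * (Q a' k * Q a' k) ∂μ := by
    have h : (fun Q : Fin m → Fin m → ℝ => (∑ a, Q a j * Q a j) * (∑ a', Q a' k * Q a' k))
        = fun Q => ∑ a : Fin m, ∑ a' : Fin m, Q a j * Q a j * (Q a' k * Q a' k) := by
      funext Q; rw [Finset.sum_mul_sum]
    rw [h, integral_finset_sum _ fun a _ =>
      integrable_finset_sum _ fun a' _ => int_m4 μ hsupp a j a j a' k a' k]
    exact Finset.sum_congr rfl fun a _ =>
      integral_finset_sum _ fun a' _ => int_m4 μ hsupp a j a j a' k a' k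
  have h4c : ∀ a : Fin m, ∑ a' : Fin m, ∫ Q, Q a j * Q a j * (Q a' k * Q a' k) ∂μ
      = B + ((m:ℝ) - 1) * D := by
    intro a
    rw [← Finset.add_sum_erase _ _ (Finset.mem_univ a), F1 a]
    congr 1
    rw [Finset.sum_congr rfl (fun a' ha' => F2 a a' (Ne.symm (Finset.ne_of_mem_erase ha'))),
      Finset.sum_const, Finset.card_erase_of_mem (Finset.mem_univ a), Finset.card_univ,
      Fintype.card_fin, nsmul_eq_mul, Nat.cast_sub (by omega : 1 ≤ m), Nat.cast_one]
  have hEq4 : (m:ℝ) * (B + ((m:ℝ) - 1) * D) = 1 := by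
    have h := h4a
    rw [h4b, Finset.sum_congr rfl (fun a _ => h4c a), Finset.sum_const, Finset.card_univ,
      Fintype.card_fin, nsmul_eq_mul] at h
    exact h
  -- Equation 5
  have h5a : ∫ Q, (∑ a, Q a j * Q a k) * (∑ a', Q a' j * Q a' k) ∂μ = 0 := by
    have hae : (fun Q : Fin m → Fin m → ℝ =>
        (∑ a, Q a j * Q a k) * (∑ a', Q a' j * Q a' k)) =ᵐ[μ] fun _ => (0:ℝ) := by
      filter_upwards [ae_orth μ hsupp] with Q hQ
      rw [col_sum hQ j k, if_neg hjk]
      simp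
    rw [integral_congr_ae hae]
    simp
  have h5b : ∫ Q, (∑ a, Q a j * Q a k) * (∑ a', Q a' j * Q a' k) ∂μ
      = ∑ a : Fin m, ∑ a' : Fin m, ∫ Q, Q a j * Q a k * (Q a' j * Q a' k) ∂μ := by
    have h : (fun Q : Fin m → Fin m → ℝ => (∑ a, Q a j * Q a k) * (∑ a', Q a' j * Q a' k))
        = fun Q => ∑ a : Fin m, ∑ a' : Fin m, Q a j * Q a k * (Q a' j * Q a' k) := by
      funext Q; rw [Finset.sum_mul_sum]
    rw [h, integral_finset_sum _ fun a _ =>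
      integrable_finset_sum _ fun a' _ => int_m4 μ hsupp a j a k a' j a' k]
    exact Finset.sum_congr rfl fun a _ =>
      integral_finset_sum _ fun a' _ => int_m4 μ hsupp a j a k a' j a' k
  have h5c : ∀ a : Fin m, ∑ a' : Fin m, ∫ Q, Q a j * Q a k * (Q a' j * Q a' k) ∂μ
      = B + ((m:ℝ) - 1) * E := by
    intro a
    rw [← Finset.add_sum_erase _ _ (Finset.mem_univ a), F1' a]
    congr 1
    rw [Finset.sum_congr rfl (fun a' ha' => F3 a a' (Ne.symm (Finset.ne_of_mem_erase ha'))),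
      Finset.sum_const, Finset.card_erase_of_mem (Finset.mem_univ a), Finset.card_univ,
      Fintype.card_fin, nsmul_eq_mul, Nat.cast_sub (by omega : 1 ≤ m), Nat.cast_one]
  have hEq5 : (m:ℝ) * (B + ((m:ℝ) - 1) * E) = 0 := by
    have h := h5a
    rw [h5b, Finset.sum_congr rfl (fun a _ => h5c a), Finset.sum_const, Finset.card_univ,
      Fintype.card_fin, nsmul_eq_mul] at h
    exact h
  -- Equation 6 : rotations
  set s : ℝ := Real.sqrt (1/2) with hsdef
  have hs : s ^ 2 = 1/2 := Real.sq_sqrt (by norm_num)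
  have hpq1 : s ^ 2 + s ^ 2 = 1 := by rw [hs]; norm_num
  have hpq2 : s ^ 2 + (-s) ^ 2 = 1 := by rw [neg_pow, hs]; norm_num
  have hT1 := transfer' μ hinv (Matrix.of (rotM r0 r1 s s)) (rotM_orth r0 r1 h01 s s hpq1)
    (f := fun Q => Q r0 j * Q r0 j * (Q r0 k * Q r0 k))
    (g := fun Q => (s * Q r0 j + s * Q r1 j) * (s * Q r0 j + s * Q r1 j) *
      ((s * Q r0 k + s * Q r1 k) * (s * Q r0 k + s * Q r1 k)))
    (meas_m4 r0 j r0 j r0 k r0 k) (int_m4 μ hsupp r0 j r0 j r0 k r0 k)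
    (fun Q => by
      simp only [Matrix.of_apply]
      rw [rotM_row0 r0 r1 h01 s s Q j, rotM_row0 r0 r1 h01 s s Q k])
  have hT2 := transfer' μ hinv (Matrix.of (rotM r0 r1 s (-s))) (rotM_orth r0 r1 h01 s (-s) hpq2)
    (f := fun Q => Q r0 j * Q r0 j * (Q r0 k * Q r0 k))
    (g := fun Q => (s * Q r0 j + -s * Q r1 j) * (s * Q r0 j + -s * Q r1 j) *
      ((s * Q r0 k + -s * Q r1 k) * (s * Q r0 k + -s * Q r1 k)))
    (meas_m4 r0 j r0 j r0 k r0 k) (int_m4 μ hsupp r0 j r0 j r0 k r0 k)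
    (fun Q => by
      simp only [Matrix.of_apply]
      rw [rotM_row0 r0 r1 h01 s (-s) Q j, rotM_row0 r0 r1 h01 s (-s) Q k])
  obtain ⟨e1, int1⟩ := hT1
  obtain ⟨e2, int2⟩ := hT2
  have hBB : B + B = ∫ Q, ((s * Q r0 j + s * Q r1 j) * (s * Q r0 j + s * Q r1 j) *
      ((s * Q r0 k + s * Q r1 k) * (s * Q r0 k + s * Q r1 k))
    + (s * Q r0 j + -s * Q r1 j) * (s * Q r0 j + -s * Q r1 j) *
      ((s * Q r0 k + -s * Q r1 k) * (s * Q r0 k + -s * Q r1 k))) ∂μ := by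
    rw [integral_add int1 int2, ← e1, ← e2, F1 r0]
  have hptw : ∀ Q : Fin m → Fin m → ℝ,
      (s * Q r0 j + s * Q r1 j) * (s * Q r0 j + s * Q r1 j) *
        ((s * Q r0 k + s * Q r1 k) * (s * Q r0 k + s * Q r1 k))
      + (s * Q r0 j + -s * Q r1 j) * (s * Q r0 j + -s * Q r1 j) *
        ((s * Q r0 k + -s * Q r1 k) * (s * Q r0 k + -s * Q r1 k))
      = 1/2 * (Q r0 j * Q r0 j * (Q r0 k * Q r0 k))
        + 1/2 * (Q r0 j * Q r0 j * (Q r1 k * Q r1 k))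
        + 1/2 * (Q r1 j * Q r1 j * (Q r0 k * Q r0 k))
        + 1/2 * (Q r1 j * Q r1 j * (Q r1 k * Q r1 k))
        + 2 * (Q r0 j * Q r0 k * (Q r1 j * Q r1 k)) := by
    intro Q
    have hs4 : s ^ 4 = 1/4 := by
      rw [show s ^ 4 = (s ^ 2) ^ 2 by ring, hs]; norm_num
    linear_combination ((Q r0 j + Q r1 j) ^ 2 * (Q r0 k + Q r1 k) ^ 2
      + (Q r0 j - Q r1 j) ^ 2 * (Q r0 k - Q r1 k) ^ 2) * hs4
  have i1 : Integrable (fun Q : Fin m → Fin m → ℝ =>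
      1/2 * (Q r0 j * Q r0 j * (Q r0 k * Q r0 k))) μ :=
    (int_m4 μ hsupp r0 j r0 j r0 k r0 k).const_mul _
  have i2 : Integrable (fun Q : Fin m → Fin m → ℝ =>
      1/2 * (Q r0 j * Q r0 j * (Q r1 k * Q r1 k))) μ :=
    (int_m4 μ hsupp r0 j r0 j r1 k r1 k).const_mul _
  have i3 : Integrable (fun Q : Fin m → Fin m → ℝ =>
      1/2 * (Q r1 j * Q r1 j * (Q r0 k * Q r0 k))) μ :=
    (int_m4 μ hsupp r1 j r1 j r0 k r0 k).const_mul _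
  have i4 : Integrable (fun Q : Fin m → Fin m → ℝ =>
      1/2 * (Q r1 j * Q r1 j * (Q r1 k * Q r1 k))) μ :=
    (int_m4 μ hsupp r1 j r1 j r1 k r1 k).const_mul _
  have i5 : Integrable (fun Q : Fin m → Fin m → ℝ =>
      2 * (Q r0 j * Q r0 k * (Q r1 j * Q r1 k))) μ :=
    (int_m4 μ hsupp r0 j r0 k r1 j r1 k).const_mul _
  have i12 : Integrable (fun Q : Fin m → Fin m → ℝ =>
      1/2 * (Q r0 j * Q r0 j * (Q r0 k * Q r0 k))
      + 1/2 * (Q r0 j * Q r0 j * (Q r1 k * Q r1 k))) μ := i1.add i2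
  have i123 : Integrable (fun Q : Fin m → Fin m → ℝ =>
      1/2 * (Q r0 j * Q r0 j * (Q r0 k * Q r0 k))
      + 1/2 * (Q r0 j * Q r0 j * (Q r1 k * Q r1 k))
      + 1/2 * (Q r1 j * Q r1 j * (Q r0 k * Q r0 k))) μ := i12.add i3
  have i1234 : Integrable (fun Q : Fin m → Fin m → ℝ =>
      1/2 * (Q r0 j * Q r0 j * (Q r0 k * Q r0 k))
      + 1/2 * (Q r0 j * Q r0 j * (Q r1 k * Q r1 k))
      + 1/2 * (Q r1 j * Q r1 j * (Q r0 k * Q r0 k))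
      + 1/2 * (Q r1 j * Q r1 j * (Q r1 k * Q r1 k))) μ := i123.add i4
  have hEq6 : B + B = 1/2 * B + 1/2 * D + 1/2 * D + 1/2 * B + 2 * E := by
    rw [hBB, integral_congr_ae (Filter.Eventually.of_forall hptw),
      integral_add i1234 i5, integral_add i123 i4, integral_add i12 i3, integral_add i1 i2,
      integral_const_mul _ _, integral_const_mul _ _, integral_const_mul _ _,
      integral_const_mul _ _, integral_const_mul _ _, F1 r0, F1 r1, F2 r0 r1 h01,
      F2 r1 r0 (Ne.symm h01), F3 r0 r1 h01]
  -- solve the linear system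
  have hkey : B * ((m:ℝ) * ((m:ℝ) + 2)) = 1 := by
    linear_combination hEq4 + 2 * hEq5 + ((m:ℝ) * ((m:ℝ) - 1)) * hEq6
  have hm2 : (2:ℝ) ≤ (m:ℝ) := by exact_mod_cast hm
  have hne : (m:ℝ) * ((m:ℝ) + 2) ≠ 0 := by nlinarith
  rw [eq_div_iff hne]
  exact hkey
end

section
/- Let m ≥ 2 be an integer and let μ be the Haar probability measure on the real orthogonal group O(m). Then for any two distinct row indices i ≠ k and any two distinct column indices j ≠ l, ∫_{O(m)} (Q i j)(Q i l)(Q k j)(Q k l) dμ(Q) = −1/((m−1) m (m+2)). -/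
open MeasureTheory Matrix

variable {m : ℕ}

private lemma measEntry (a b : Fin m) :
    Measurable fun Q : Fin m → Fin m → ℝ => Q a b :=
  (measurable_pi_apply b).comp (measurable_pi_apply a)

private lemma exists_perm {α : Type*} [DecidableEq α] {i k a c : α}
    (hik : i ≠ k) (hac : a ≠ c) : ∃ σ : Equiv.Perm α, σ i = a ∧ σ k = c := by
  refine ⟨Equiv.swap i a * Equiv.swap k (Equiv.swap i a c), ?_, ?_⟩
  · have h1 : i ≠ Equiv.swap i a c := by
      intro h
      apply hac
      have := congrArg (Equiv.swap i a) h
      rwa [Equiv.swap_apply_left, Equiv.swap_apply_self] at this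
    simp [Equiv.Perm.mul_apply, Equiv.swap_apply_of_ne_of_ne hik h1]
  · simp [Equiv.Perm.mul_apply, Equiv.swap_apply_left, Equiv.swap_apply_self]

private lemma inv_int (μ : Measure (Fin m → Fin m → ℝ))
    (hinv : ∀ P : Matrix (Fin m) (Fin m) ℝ, Pᵀ * P = 1 →
      μ.map (fun Q => Matrix.of.symm (P * Matrix.of Q)) = μ)
    (P : Matrix (Fin m) (Fin m) ℝ) (hP : Pᵀ * P = 1)
    (f : (Fin m → Fin m → ℝ) → ℝ) (hf : Measurable f) :
    ∫ Q, f (fun a b => ∑ c, P a c * Q c b) ∂μ = ∫ Q, f Q ∂μ := by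
  have hT : Measurable (fun Q : Fin m → Fin m → ℝ => Matrix.of.symm (P * Matrix.of Q)) := by
    refine measurable_pi_lambda _ fun a => measurable_pi_lambda _ fun b => ?_
    have : (fun Q : Fin m → Fin m → ℝ => Matrix.of.symm (P * Matrix.of Q) a b)
        = fun Q : Fin m → Fin m → ℝ => ∑ c, P a c * Q c b := by
      funext Q; simp [Matrix.mul_apply]
    rw [this]
    exact Finset.measurable_sum _ fun c _ => (measEntry c b).const_mul _
  have h2 : ∫ Q, f Q ∂μ = ∫ Q, f (Matrix.of.symm (P * Matrix.of Q)) ∂μ := by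
    conv_lhs => rw [← hinv P hP]
    rw [integral_map hT.aemeasurable hf.aestronglyMeasurable]
  rw [h2]
  exact integral_congr_ae (Filter.Eventually.of_forall fun Q => rfl)

private lemma cor_sign (μ : Measure (Fin m → Fin m → ℝ))
    (hinv : ∀ P : Matrix (Fin m) (Fin m) ℝ, Pᵀ * P = 1 →
      μ.map (fun Q => Matrix.of.symm (P * Matrix.of Q)) = μ)
    (r : Fin m) (f : (Fin m → Fin m → ℝ) → ℝ) (hf : Measurable f) :
    ∫ Q, f (fun a b => (if a = r then -1 else 1) * Q a b) ∂μ = ∫ Q, f Q ∂μ := by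
  have hP : (Matrix.diagonal (fun a : Fin m => if a = r then (-1:ℝ) else 1))ᵀ *
      Matrix.diagonal (fun a : Fin m => if a = r then (-1:ℝ) else 1) = 1 := by
    rw [Matrix.diagonal_transpose, Matrix.diagonal_mul_diagonal]
    convert Matrix.diagonal_one with a
    by_cases h : a = r <;> simp [h]
  have h := inv_int μ hinv _ hP f hf
  rw [← h]
  refine integral_congr_ae (Filter.Eventually.of_forall fun Q => ?_)
  refine congrArg f (funext fun a => funext fun b => ?_)
  symm
  rw [Finset.sum_eq_single a]
  · simp
  · intro c _ hc; simp [Matrix.diagonal_apply, hc.symm]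
  · simp

private lemma cor_perm (μ : Measure (Fin m → Fin m → ℝ))
    (hinv : ∀ P : Matrix (Fin m) (Fin m) ℝ, Pᵀ * P = 1 →
      μ.map (fun Q => Matrix.of.symm (P * Matrix.of Q)) = μ)
    (σ : Equiv.Perm (Fin m)) (f : (Fin m → Fin m → ℝ) → ℝ) (hf : Measurable f) :
    ∫ Q, f (fun a b => Q (σ a) b) ∂μ = ∫ Q, f Q ∂μ := by
  set P : Matrix (Fin m) (Fin m) ℝ := Matrix.of fun a b => if σ a = b then 1 else 0 with hPdef
  have hPapp : ∀ x y, P x y = if σ x = y then (1:ℝ) else 0 := fun _ _ => rfl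
  have hP : Pᵀ * P = 1 := by
    ext a b
    rw [Matrix.mul_apply]
    have key : ∀ c, Pᵀ a c * P c b = if c = σ.symm a then (if a = b then (1:ℝ) else 0) else 0 := by
      intro c
      by_cases h : σ c = a
      · have hc : c = σ.symm a := by rw [← h, Equiv.symm_apply_apply]
        rw [Matrix.transpose_apply, hPapp, hPapp, if_pos h, if_pos hc, h, one_mul]
      · have hc : c ≠ σ.symm a := fun hh => h (by rw [hh, Equiv.apply_symm_apply])
        rw [Matrix.transpose_apply, hPapp, hPapp, if_neg h, if_neg hc, zero_mul]
    simp only [key]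
    rw [Finset.sum_ite_eq' Finset.univ (σ.symm a)]
    simp [Matrix.one_apply]
  have h := inv_int μ hinv P hP f hf
  rw [← h]
  refine integral_congr_ae (Filter.Eventually.of_forall fun Q => ?_)
  refine congrArg f (funext fun a => funext fun b => ?_)
  symm
  rw [Finset.sum_eq_single (σ a)]
  · simp [hPapp]
  · intro c _ hc; simp [hPapp, hc.symm]
  · simp

set_option maxHeartbeats 1000000 in
private lemma cor_rot (μ : Measure (Fin m → Fin m → ℝ))
    (hinv : ∀ P : Matrix (Fin m) (Fin m) ℝ, Pᵀ * P = 1 →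
      μ.map (fun Q => Matrix.of.symm (P * Matrix.of Q)) = μ)
    (i k : Fin m) (hik : i ≠ k)
    (f : (Fin m → Fin m → ℝ) → ℝ) (hf : Measurable f) :
    ∫ Q, f (fun a b => if a = i then (Real.sqrt 2)⁻¹ * (Q i b - Q k b)
      else if a = k then (Real.sqrt 2)⁻¹ * (Q i b + Q k b) else Q a b) ∂μ
      = ∫ Q, f Q ∂μ := by
  set c : ℝ := (Real.sqrt 2)⁻¹ with hcdef
  have hc : c * c = 1/2 := by
    rw [hcdef, ← mul_inv, Real.mul_self_sqrt (by norm_num : (0:ℝ) ≤ 2)]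
    norm_num
  set P : Matrix (Fin m) (Fin m) ℝ := Matrix.of fun a b =>
    if a = i then (if b = i then c else if b = k then -c else 0)
    else if a = k then (if b = i then c else if b = k then c else 0)
    else if a = b then 1 else 0 with hPdef
  have hPapp : ∀ a b, P a b =
      (if a = i then (if b = i then c else if b = k then -c else 0)
      else if a = k then (if b = i then c else if b = k then c else 0)
      else if a = b then 1 else 0) := fun _ _ => rfl
  have split2 : ∀ g : Fin m → ℝ,
      ∑ x, g x = g i + g k + ∑ x ∈ Finset.univ \ {i, k}, g x := by
    intro g
    rw [← Finset.sum_sdiff (Finset.subset_univ ({i, k} : Finset (Fin m))),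
      Finset.sum_pair hik]
    ring
  have hP : Pᵀ * P = 1 := by
    ext a b
    rw [Matrix.mul_apply, split2]
    have hrest : ∑ x ∈ Finset.univ \ ({i, k} : Finset (Fin m)), Pᵀ a x * P x b
        = if a ∈ Finset.univ \ ({i, k} : Finset (Fin m)) then (if a = b then (1:ℝ) else 0) else 0 := by
      rw [← Finset.sum_ite_eq' (Finset.univ \ ({i, k} : Finset (Fin m))) a
        (fun _ => if a = b then (1:ℝ) else 0)]
      refine Finset.sum_congr rfl fun x hx => ?_
      simp only [Finset.mem_sdiff, Finset.mem_insert, Finset.mem_singleton, not_or] at hx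
      obtain ⟨-, hxi, hxk⟩ := hx
      rw [Matrix.transpose_apply, hPapp, hPapp, if_neg hxi, if_neg hxk, if_neg hxi, if_neg hxk]
      by_cases hxa : x = a
      · subst hxa
        by_cases hxb : x = b <;> simp [hxb]
      · simp [hxa]
    rw [hrest, Matrix.transpose_apply, Matrix.transpose_apply,
      hPapp i a, hPapp k a, hPapp i b, hPapp k b, Matrix.one_apply]
    simp only [Finset.mem_sdiff, Finset.mem_univ, Finset.mem_insert, Finset.mem_singleton,
      true_and, not_or]
    clear hrest hPapp hPdef split2 hinv hf hcdef
    clear_value P c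
    clear P μ
    by_cases hai : a = i <;> by_cases hak : a = k <;> by_cases hbi : b = i <;>
      by_cases hbk : b = k <;>
      simp_all [hik, hik.symm, eq_comm] <;> nlinarith [hc]
  have h := inv_int μ hinv P hP f hf
  rw [← h]
  refine integral_congr_ae (Filter.Eventually.of_forall fun Q => ?_)
  refine congrArg f (funext fun a => funext fun b => ?_)
  symm
  rw [split2 (fun x => P a x * Q x b)]
  have hrest : ∑ x ∈ Finset.univ \ ({i, k} : Finset (Fin m)), P a x * Q x b
      = if a ∈ Finset.univ \ ({i, k} : Finset (Fin m)) then Q a b else 0 := by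
    rw [← Finset.sum_ite_eq' (Finset.univ \ ({i, k} : Finset (Fin m))) a (fun x => Q x b)]
    refine Finset.sum_congr rfl fun x hx => ?_
    simp only [Finset.mem_sdiff, Finset.mem_insert, Finset.mem_singleton, not_or] at hx
    obtain ⟨-, hxi, hxk⟩ := hx
    by_cases hai : a = i
    · rw [hPapp, if_pos hai, if_neg hxi, if_neg hxk, zero_mul,
        if_neg (fun hh : x = a => hxi (hh.trans hai))]
    · by_cases hak : a = k
      · rw [hPapp, if_neg hai, if_pos hak, if_neg hxi, if_neg hxk, zero_mul,
          if_neg (fun hh : x = a => hxk (hh.trans hak))]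
      · rw [hPapp, if_neg hai, if_neg hak]
        by_cases hax : a = x
        · rw [if_pos hax, one_mul, if_pos hax.symm]
        · rw [if_neg hax, zero_mul, if_neg (fun hh : x = a => hax hh.symm)]
  rw [hrest, hPapp a i, hPapp a k]
  simp only [Finset.mem_sdiff, Finset.mem_univ, Finset.mem_insert, Finset.mem_singleton,
    true_and, not_or]
  clear hrest hPapp hPdef split2 hinv hf hcdef hP h
  clear_value P c
  clear P μ
  by_cases hai : a = i <;> by_cases hak : a = k <;>
    simp_all [hik, hik.symm, eq_comm] <;> ring

private lemma ae_orth (μ : Measure (Fin m → Fin m → ℝ))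
    [IsProbabilityMeasure μ]
    (hsupp : μ {Q | (Matrix.of Q)ᵀ * Matrix.of Q = 1} = 1) :
    ∀ᵐ Q ∂μ, ∀ a b : Fin m, ∑ x, Q x a * Q x b = if a = b then (1:ℝ) else 0 := by
  have hms : MeasurableSet {Q : Fin m → Fin m → ℝ | (Matrix.of Q)ᵀ * Matrix.of Q = 1} := by
    have hset : {Q : Fin m → Fin m → ℝ | (Matrix.of Q)ᵀ * Matrix.of Q = 1}
        = ⋂ a, ⋂ b, {Q : Fin m → Fin m → ℝ |
            ∑ x, Q x a * Q x b = (1 : Matrix (Fin m) (Fin m) ℝ) a b} := by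
      ext Q
      simp only [Set.mem_setOf_eq, Set.mem_iInter]
      constructor
      · intro h a b
        rw [show (∑ x, Q x a * Q x b) = ((Matrix.of Q)ᵀ * Matrix.of Q) a b by
          simp [Matrix.mul_apply], h]
      · intro h
        ext a b
        rw [show ((Matrix.of Q)ᵀ * Matrix.of Q) a b = ∑ x, Q x a * Q x b by
          simp [Matrix.mul_apply], h a b]
    rw [hset]
    refine MeasurableSet.iInter fun a => MeasurableSet.iInter fun b => ?_
    exact measurableSet_eq_fun
      (Finset.measurable_sum _ fun x _ => (measEntry x a).mul (measEntry x b))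
      measurable_const
  have h0 : μ {Q : Fin m → Fin m → ℝ | (Matrix.of Q)ᵀ * Matrix.of Q = 1}ᶜ = 0 :=
    (prob_compl_eq_zero_iff hms).mpr hsupp
  have hs : ∀ᵐ Q ∂μ, (Matrix.of Q)ᵀ * Matrix.of Q = 1 := ae_iff.mpr h0
  filter_upwards [hs] with Q hQ a b
  have h1 : ((Matrix.of Q)ᵀ * Matrix.of Q) a b = (1 : Matrix (Fin m) (Fin m) ℝ) a b := by
    rw [hQ]
  simpa [Matrix.mul_apply, Matrix.one_apply] using h1

private lemma ae_bdd (μ : Measure (Fin m → Fin m → ℝ)) [IsProbabilityMeasure μ]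
    (hsupp : μ {Q | (Matrix.of Q)ᵀ * Matrix.of Q = 1} = 1) :
    ∀ᵐ Q ∂μ, ∀ a b : Fin m, |Q a b| ≤ 1 := by
  filter_upwards [ae_orth μ hsupp] with Q hQ a b
  have h1 : ∑ x, Q x b * Q x b = 1 := by simpa using hQ b b
  have h2 : Q a b * Q a b ≤ 1 := by
    rw [← h1]
    exact Finset.single_le_sum (f := fun x => Q x b * Q x b)
      (fun x _ => mul_self_nonneg _) (Finset.mem_univ a)
  exact abs_le_one_iff_mul_self_le_one.mpr h2

private lemma integ4 (μ : Measure (Fin m → Fin m → ℝ)) [IsProbabilityMeasure μ]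
    (hb : ∀ᵐ Q ∂μ, ∀ a b : Fin m, |Q a b| ≤ 1)
    (a b a' b' a'' b'' a''' b''' : Fin m) :
    Integrable (fun Q : Fin m → Fin m → ℝ =>
      Q a b * Q a' b' * Q a'' b'' * Q a''' b''') μ := by
  have hmeas : Measurable (fun Q : Fin m → Fin m → ℝ =>
      Q a b * Q a' b' * Q a'' b'' * Q a''' b''') :=
    (((measEntry a b).mul (measEntry a' b')).mul (measEntry a'' b'')).mul (measEntry a''' b''')
  refine Integrable.mono' (integrable_const (1:ℝ)) hmeas.aestronglyMeasurable ?_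
  filter_upwards [hb] with Q hQ
  have h12 : |Q a b| * |Q a' b'| ≤ 1 := by
    simpa using mul_le_mul (hQ a b) (hQ a' b') (abs_nonneg _) zero_le_one
  have h123 : |Q a b| * |Q a' b'| * |Q a'' b''| ≤ 1 := by
    simpa using mul_le_mul h12 (hQ a'' b'') (abs_nonneg _) zero_le_one
  calc ‖Q a b * Q a' b' * Q a'' b'' * Q a''' b'''‖
      = |Q a b| * |Q a' b'| * |Q a'' b''| * |Q a''' b'''| := by
        rw [Real.norm_eq_abs, abs_mul, abs_mul, abs_mul]
    _ ≤ 1 := by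
        simpa using mul_le_mul h123 (hQ a''' b''') (abs_nonneg _) zero_le_one

set_option maxHeartbeats 1000000 in
/-- For the Haar probability measure `μ` on the real orthogonal
group `O(m)` with `m ≥ 2`, for distinct rows `i ≠ k` and distinct columns `j ≠ l`,
`∫ (Q i j)(Q i l)(Q k j)(Q k l) dμ = −1/((m−1) m (m+2))`. -/
theorem haar_orthogonal_offdiag_moment (m : ℕ) (hm : 2 ≤ m)
    (μ : Measure (Fin m → Fin m → ℝ)) [IsProbabilityMeasure μ]
    (hsupp : μ {Q | (Matrix.of Q)ᵀ * Matrix.of Q = 1} = 1)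
    (hinv : ∀ P : Matrix (Fin m) (Fin m) ℝ, Pᵀ * P = 1 →
      μ.map (fun Q => Matrix.of.symm (P * Matrix.of Q)) = μ)
    (i k j l : Fin m) (hik : i ≠ k) (hjl : j ≠ l) :
    ∫ Q, (Q i j) * (Q i l) * (Q k j) * (Q k l) ∂μ =
      -1 / (((m : ℝ) - 1) * (m : ℝ) * ((m : ℝ) + 2)) := by
  have hb := ae_bdd μ hsupp
  have horth := ae_orth μ hsupp
  have meas4 : ∀ a b a' b' a'' b'' a''' b''' : Fin m,
      Measurable (fun Q : Fin m → Fin m → ℝ => Q a b * Q a' b' * Q a'' b'' * Q a''' b''') :=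
    fun a b a' b' a'' b'' a''' b''' =>
      (((measEntry a b).mul (measEntry a' b')).mul (measEntry a'' b'')).mul (measEntry a''' b''')
  -- row relabelling
  have hBrow : ∀ a : Fin m, ∫ Q, Q a j * Q a l * Q a j * Q a l ∂μ
      = ∫ Q, Q i j * Q i l * Q i j * Q i l ∂μ := by
    intro a
    have h := cor_perm μ hinv (Equiv.swap i a)
      (fun Q => Q i j * Q i l * Q i j * Q i l) (meas4 i j i l i j i l)
    simp only [Equiv.swap_apply_left] at h
    exact h
  have hCpair : ∀ a c : Fin m, a ≠ c → ∫ Q, Q a j * Q a l * Q c j * Q c l ∂μ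
      = ∫ Q, Q i j * Q i l * Q k j * Q k l ∂μ := by
    intro a c hac
    obtain ⟨σ, hσi, hσk⟩ := exists_perm hik hac
    have h := cor_perm μ hinv σ
      (fun Q => Q i j * Q i l * Q k j * Q k l) (meas4 i j i l k j k l)
    simp only [hσi, hσk] at h
    exact h
  have hDpair : ∀ a c : Fin m, a ≠ c → ∫ Q, Q a j * Q a j * Q c l * Q c l ∂μ
      = ∫ Q, Q i j * Q i j * Q k l * Q k l ∂μ := by
    intro a c hac
    obtain ⟨σ, hσi, hσk⟩ := exists_perm hik hac
    have h := cor_perm μ hinv σ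
      (fun Q => Q i j * Q i j * Q k l * Q k l) (meas4 i j i j k l k l)
    simp only [hσi, hσk] at h
    exact h
  -- odd moments vanish
  have hodd : ∀ (r : Fin m) (g : (Fin m → Fin m → ℝ) → ℝ), Measurable g →
      (∀ Q : Fin m → Fin m → ℝ,
        g (fun a b => (if a = r then (-1:ℝ) else 1) * Q a b) = - g Q) →
      ∫ Q, g Q ∂μ = 0 := by
    intro r g hg hneg
    have h := cor_sign μ hinv r g hg
    rw [integral_congr_ae (Filter.Eventually.of_forall fun Q => hneg Q), integral_neg] at h
    linarith
  -- Equation 1 : orthogonality of columns j and l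
  have hzero : ∫ Q, (∑ a, Q a j * Q a l) * (∑ c, Q c j * Q c l) ∂μ = 0 := by
    rw [show (0:ℝ) = ∫ (_ : Fin m → Fin m → ℝ), (0:ℝ) ∂μ by simp]
    refine integral_congr_ae ?_
    filter_upwards [horth] with Q hQ
    rw [hQ j l, if_neg hjl]
    norm_num
  have hsum1 : ∫ Q, (∑ a, Q a j * Q a l) * (∑ c, Q c j * Q c l) ∂μ
      = ∑ a : Fin m, ∑ c : Fin m, ∫ Q, Q a j * Q a l * Q c j * Q c l ∂μ := by
    have hpt : (fun Q : Fin m → Fin m → ℝ => (∑ a, Q a j * Q a l) * (∑ c, Q c j * Q c l))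
        = fun Q => ∑ a : Fin m, ∑ c : Fin m, Q a j * Q a l * Q c j * Q c l := by
      funext Q
      rw [Finset.sum_mul_sum]
      exact Finset.sum_congr rfl fun a _ => Finset.sum_congr rfl fun c _ => by ring
    rw [hpt]
    refine (integral_finset_sum _ fun a _ =>
        integrable_finset_sum _ fun c _ => integ4 μ hb a j a l c j c l).trans
      (Finset.sum_congr rfl fun a _ =>
        integral_finset_sum _ fun c _ => integ4 μ hb a j a l c j c l)
  have hval1 : ∀ a c : Fin m, ∫ Q, Q a j * Q a l * Q c j * Q c l ∂μ
      = if a = c then ∫ Q, Q i j * Q i l * Q i j * Q i l ∂μ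
        else ∫ Q, Q i j * Q i l * Q k j * Q k l ∂μ := by
    intro a c
    by_cases h : a = c
    · subst h
      rw [if_pos rfl]
      exact hBrow a
    · rw [if_neg h]
      exact hCpair a c h
  have e1 : (m:ℝ) * (∫ Q, Q i j * Q i l * Q i j * Q i l ∂μ)
      + (m:ℝ) * ((m:ℝ) - 1) * (∫ Q, Q i j * Q i l * Q k j * Q k l ∂μ) = 0 := by
    have h := hzero
    rw [hsum1] at h
    rw [Finset.sum_congr rfl (fun a _ => Finset.sum_congr rfl fun c _ => hval1 a c)] at h
    have h2 : ∀ a : Fin m,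
        (∑ c : Fin m, if a = c then ∫ Q, Q i j * Q i l * Q i j * Q i l ∂μ
          else ∫ Q, Q i j * Q i l * Q k j * Q k l ∂μ)
        = (∫ Q, Q i j * Q i l * Q i j * Q i l ∂μ)
          + ((m:ℝ) - 1) * (∫ Q, Q i j * Q i l * Q k j * Q k l ∂μ) := by
      intro a
      have hA : ∀ c : Fin m, (if a = c then ∫ Q, Q i j * Q i l * Q i j * Q i l ∂μ
          else ∫ Q, Q i j * Q i l * Q k j * Q k l ∂μ)
          = (∫ Q, Q i j * Q i l * Q k j * Q k l ∂μ)
            + (if a = c then (∫ Q, Q i j * Q i l * Q i j * Q i l ∂μ)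
              - (∫ Q, Q i j * Q i l * Q k j * Q k l ∂μ) else 0) := by
        intro c
        by_cases h' : a = c
        · rw [if_pos h', if_pos h']
          ring
        · rw [if_neg h', if_neg h']
          ring
      rw [Finset.sum_congr rfl (fun c _ => hA c),
        Finset.sum_add_distrib, Finset.sum_const, Finset.sum_ite_eq,
        if_pos (Finset.mem_univ a), Finset.card_univ, Fintype.card_fin, nsmul_eq_mul]
      ring
    rw [Finset.sum_congr rfl fun a _ => h2 a, Finset.sum_const, Finset.card_univ,
      Fintype.card_fin, nsmul_eq_mul] at h
    linear_combination h
  -- Equation 2 : unit norms of columns j and l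
  have hone : ∫ Q, (∑ a, Q a j * Q a j) * (∑ c, Q c l * Q c l) ∂μ = 1 := by
    rw [show (1:ℝ) = ∫ (_ : Fin m → Fin m → ℝ), (1:ℝ) ∂μ by simp]
    refine integral_congr_ae ?_
    filter_upwards [horth] with Q hQ
    rw [hQ j j, hQ l l]
    simp
  have hsum2 : ∫ Q, (∑ a, Q a j * Q a j) * (∑ c, Q c l * Q c l) ∂μ
      = ∑ a : Fin m, ∑ c : Fin m, ∫ Q, Q a j * Q a j * Q c l * Q c l ∂μ := by
    have hpt : (fun Q : Fin m → Fin m → ℝ => (∑ a, Q a j * Q a j) * (∑ c, Q c l * Q c l))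
        = fun Q => ∑ a : Fin m, ∑ c : Fin m, Q a j * Q a j * Q c l * Q c l := by
      funext Q
      rw [Finset.sum_mul_sum]
      exact Finset.sum_congr rfl fun a _ => Finset.sum_congr rfl fun c _ => by ring
    rw [hpt]
    refine (integral_finset_sum _ fun a _ =>
        integrable_finset_sum _ fun c _ => integ4 μ hb a j a j c l c l).trans
      (Finset.sum_congr rfl fun a _ =>
        integral_finset_sum _ fun c _ => integ4 μ hb a j a j c l c l)
  have hval2 : ∀ a c : Fin m, ∫ Q, Q a j * Q a j * Q c l * Q c l ∂μ
      = if a = c then ∫ Q, Q i j * Q i l * Q i j * Q i l ∂μ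
        else ∫ Q, Q i j * Q i j * Q k l * Q k l ∂μ := by
    intro a c
    by_cases h : a = c
    · subst h
      rw [if_pos rfl, show (∫ Q, Q a j * Q a j * Q a l * Q a l ∂μ)
          = ∫ Q, Q a j * Q a l * Q a j * Q a l ∂μ from
        integral_congr_ae (Filter.Eventually.of_forall fun Q => by ring)]
      exact hBrow a
    · rw [if_neg h]
      exact hDpair a c h
  have e2 : (m:ℝ) * (∫ Q, Q i j * Q i l * Q i j * Q i l ∂μ)
      + (m:ℝ) * ((m:ℝ) - 1) * (∫ Q, Q i j * Q i j * Q k l * Q k l ∂μ) = 1 := by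
    have h := hone
    rw [hsum2] at h
    rw [Finset.sum_congr rfl (fun a _ => Finset.sum_congr rfl fun c _ => hval2 a c)] at h
    have h2 : ∀ a : Fin m,
        (∑ c : Fin m, if a = c then ∫ Q, Q i j * Q i l * Q i j * Q i l ∂μ
          else ∫ Q, Q i j * Q i j * Q k l * Q k l ∂μ)
        = (∫ Q, Q i j * Q i l * Q i j * Q i l ∂μ)
          + ((m:ℝ) - 1) * (∫ Q, Q i j * Q i j * Q k l * Q k l ∂μ) := by
      intro a
      have hA : ∀ c : Fin m, (if a = c then ∫ Q, Q i j * Q i l * Q i j * Q i l ∂μ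
          else ∫ Q, Q i j * Q i j * Q k l * Q k l ∂μ)
          = (∫ Q, Q i j * Q i j * Q k l * Q k l ∂μ)
            + (if a = c then (∫ Q, Q i j * Q i l * Q i j * Q i l ∂μ)
              - (∫ Q, Q i j * Q i j * Q k l * Q k l ∂μ) else 0) := by
        intro c
        by_cases h' : a = c
        · rw [if_pos h', if_pos h']
          ring
        · rw [if_neg h', if_neg h']
          ring
      rw [Finset.sum_congr rfl (fun c _ => hA c),
        Finset.sum_add_distrib, Finset.sum_const, Finset.sum_ite_eq,
        if_pos (Finset.mem_univ a), Finset.card_univ, Fintype.card_fin, nsmul_eq_mul]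
      ring
    rw [Finset.sum_congr rfl fun a _ => h2 a, Finset.sum_const, Finset.card_univ,
      Fintype.card_fin, nsmul_eq_mul] at h
    linear_combination h
  -- Equation 3 : rotation by 45 degrees in rows i and k
  have hrot := cor_rot μ hinv i k hik
    (fun Q => Q i j * Q i l * Q i j * Q i l) (meas4 i j i l i j i l)
  have hrot2 : ∫ Q, ((Real.sqrt 2)⁻¹ * (Q i j - Q k j)) * ((Real.sqrt 2)⁻¹ * (Q i l - Q k l))
      * ((Real.sqrt 2)⁻¹ * (Q i j - Q k j)) * ((Real.sqrt 2)⁻¹ * (Q i l - Q k l)) ∂μ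
      = ∫ Q, Q i j * Q i l * Q i j * Q i l ∂μ := by
    rw [← hrot]
    exact integral_congr_ae (Filter.Eventually.of_forall fun Q => by simp)
  have hpt3 : ∀ Q : Fin m → Fin m → ℝ,
      ((Real.sqrt 2)⁻¹ * (Q i j - Q k j)) * ((Real.sqrt 2)⁻¹ * (Q i l - Q k l))
        * ((Real.sqrt 2)⁻¹ * (Q i j - Q k j)) * ((Real.sqrt 2)⁻¹ * (Q i l - Q k l))
      = (1/4) * (Q i j * Q i l * Q i j * Q i l + Q k j * Q k l * Q k j * Q k l
        + Q i j * Q i j * Q k l * Q k l + Q k j * Q k j * Q i l * Q i l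
        + 4 * (Q i j * Q i l * Q k j * Q k l)
        - 2 * (Q i j * Q i j * Q i l * Q k l) - 2 * (Q i j * Q k j * Q i l * Q i l)
        - 2 * (Q i j * Q k j * Q k l * Q k l) - 2 * (Q k j * Q k j * Q i l * Q k l)) := by
    intro Q
    have h2 : (Real.sqrt 2)⁻¹ * (Real.sqrt 2)⁻¹ = 1/2 := by
      rw [← mul_inv, Real.mul_self_sqrt (by norm_num : (0:ℝ) ≤ 2)]
      norm_num
    linear_combination ((Real.sqrt 2)⁻¹ * (Real.sqrt 2)⁻¹ + 1/2)
      * ((Q i j - Q k j) * (Q i l - Q k l))^2 * h2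
  have I1 := integ4 μ hb i j i l i j i l
  have I2 := integ4 μ hb k j k l k j k l
  have I3 := integ4 μ hb i j i j k l k l
  have I4 := integ4 μ hb k j k j i l i l
  have I5 := integ4 μ hb i j i l k j k l
  have I6 := integ4 μ hb i j i j i l k l
  have I7 := integ4 μ hb i j k j i l i l
  have I8 := integ4 μ hb i j k j k l k l
  have I9 := integ4 μ hb k j k j i l k l
  have J5 : Integrable (fun Q : Fin m → Fin m → ℝ =>
      4 * (Q i j * Q i l * Q k j * Q k l)) μ := I5.const_mul (4:ℝ)
  have J6 : Integrable (fun Q : Fin m → Fin m → ℝ =>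
      2 * (Q i j * Q i j * Q i l * Q k l)) μ := I6.const_mul (2:ℝ)
  have J7 : Integrable (fun Q : Fin m → Fin m → ℝ =>
      2 * (Q i j * Q k j * Q i l * Q i l)) μ := I7.const_mul (2:ℝ)
  have J8 : Integrable (fun Q : Fin m → Fin m → ℝ =>
      2 * (Q i j * Q k j * Q k l * Q k l)) μ := I8.const_mul (2:ℝ)
  have J9 : Integrable (fun Q : Fin m → Fin m → ℝ =>
      2 * (Q k j * Q k j * Q i l * Q k l)) μ := I9.const_mul (2:ℝ)
  have A1 : Integrable (fun Q : Fin m → Fin m → ℝ =>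
      Q i j * Q i l * Q i j * Q i l + Q k j * Q k l * Q k j * Q k l) μ := I1.add I2
  have A2 : Integrable (fun Q : Fin m → Fin m → ℝ =>
      Q i j * Q i l * Q i j * Q i l + Q k j * Q k l * Q k j * Q k l
      + Q i j * Q i j * Q k l * Q k l) μ := A1.add I3
  have A3 : Integrable (fun Q : Fin m → Fin m → ℝ =>
      Q i j * Q i l * Q i j * Q i l + Q k j * Q k l * Q k j * Q k l
      + Q i j * Q i j * Q k l * Q k l + Q k j * Q k j * Q i l * Q i l) μ := A2.add I4
  have A4 : Integrable (fun Q : Fin m → Fin m → ℝ =>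
      Q i j * Q i l * Q i j * Q i l + Q k j * Q k l * Q k j * Q k l
      + Q i j * Q i j * Q k l * Q k l + Q k j * Q k j * Q i l * Q i l
      + 4 * (Q i j * Q i l * Q k j * Q k l)) μ := A3.add J5
  have A5 : Integrable (fun Q : Fin m → Fin m → ℝ =>
      Q i j * Q i l * Q i j * Q i l + Q k j * Q k l * Q k j * Q k l
      + Q i j * Q i j * Q k l * Q k l + Q k j * Q k j * Q i l * Q i l
      + 4 * (Q i j * Q i l * Q k j * Q k l)
      - 2 * (Q i j * Q i j * Q i l * Q k l)) μ := A4.sub J6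
  have A6 : Integrable (fun Q : Fin m → Fin m → ℝ =>
      Q i j * Q i l * Q i j * Q i l + Q k j * Q k l * Q k j * Q k l
      + Q i j * Q i j * Q k l * Q k l + Q k j * Q k j * Q i l * Q i l
      + 4 * (Q i j * Q i l * Q k j * Q k l)
      - 2 * (Q i j * Q i j * Q i l * Q k l)
      - 2 * (Q i j * Q k j * Q i l * Q i l)) μ := A5.sub J7
  have A7 : Integrable (fun Q : Fin m → Fin m → ℝ =>
      Q i j * Q i l * Q i j * Q i l + Q k j * Q k l * Q k j * Q k l
      + Q i j * Q i j * Q k l * Q k l + Q k j * Q k j * Q i l * Q i l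
      + 4 * (Q i j * Q i l * Q k j * Q k l)
      - 2 * (Q i j * Q i j * Q i l * Q k l)
      - 2 * (Q i j * Q k j * Q i l * Q i l)
      - 2 * (Q i j * Q k j * Q k l * Q k l)) μ := A6.sub J8
  have hsplit : ∫ Q, (Q i j * Q i l * Q i j * Q i l + Q k j * Q k l * Q k j * Q k l
      + Q i j * Q i j * Q k l * Q k l + Q k j * Q k j * Q i l * Q i l
      + 4 * (Q i j * Q i l * Q k j * Q k l)
      - 2 * (Q i j * Q i j * Q i l * Q k l)
      - 2 * (Q i j * Q k j * Q i l * Q i l)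
      - 2 * (Q i j * Q k j * Q k l * Q k l)
      - 2 * (Q k j * Q k j * Q i l * Q k l)) ∂μ
      = (∫ Q, Q i j * Q i l * Q i j * Q i l ∂μ)
      + (∫ Q, Q k j * Q k l * Q k j * Q k l ∂μ)
      + (∫ Q, Q i j * Q i j * Q k l * Q k l ∂μ)
      + (∫ Q, Q k j * Q k j * Q i l * Q i l ∂μ)
      + 4 * (∫ Q, Q i j * Q i l * Q k j * Q k l ∂μ)
      - 2 * (∫ Q, Q i j * Q i j * Q i l * Q k l ∂μ)
      - 2 * (∫ Q, Q i j * Q k j * Q i l * Q i l ∂μ)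
      - 2 * (∫ Q, Q i j * Q k j * Q k l * Q k l ∂μ)
      - 2 * (∫ Q, Q k j * Q k j * Q i l * Q k l ∂μ) := by
    rw [integral_sub A7 J9, integral_sub A6 J8, integral_sub A5 J7,
      integral_sub A4 J6, integral_add A3 J5, integral_add A2 I4, integral_add A1 I3,
      integral_add I1 I2, integral_const_mul, integral_const_mul, integral_const_mul,
      integral_const_mul, integral_const_mul]
  have hrot3 : (1/4 : ℝ) * ((∫ Q, Q i j * Q i l * Q i j * Q i l ∂μ)
      + (∫ Q, Q k j * Q k l * Q k j * Q k l ∂μ)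
      + (∫ Q, Q i j * Q i j * Q k l * Q k l ∂μ)
      + (∫ Q, Q k j * Q k j * Q i l * Q i l ∂μ)
      + 4 * (∫ Q, Q i j * Q i l * Q k j * Q k l ∂μ)
      - 2 * (∫ Q, Q i j * Q i j * Q i l * Q k l ∂μ)
      - 2 * (∫ Q, Q i j * Q k j * Q i l * Q i l ∂μ)
      - 2 * (∫ Q, Q i j * Q k j * Q k l * Q k l ∂μ)
      - 2 * (∫ Q, Q k j * Q k j * Q i l * Q k l ∂μ))
      = ∫ Q, Q i j * Q i l * Q i j * Q i l ∂μ := by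
    have h1 : ∫ Q, (1 / 4 : ℝ) * (Q i j * Q i l * Q i j * Q i l + Q k j * Q k l * Q k j * Q k l
        + Q i j * Q i j * Q k l * Q k l + Q k j * Q k j * Q i l * Q i l
        + 4 * (Q i j * Q i l * Q k j * Q k l)
        - 2 * (Q i j * Q i j * Q i l * Q k l)
        - 2 * (Q i j * Q k j * Q i l * Q i l)
        - 2 * (Q i j * Q k j * Q k l * Q k l)
        - 2 * (Q k j * Q k j * Q i l * Q k l)) ∂μ
        = ∫ Q, Q i j * Q i l * Q i j * Q i l ∂μ := by
      rw [← hrot2]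
      exact integral_congr_ae (Filter.Eventually.of_forall fun Q => (hpt3 Q).symm)
    rw [integral_const_mul, hsplit] at h1
    exact h1
  have hZ6 : ∫ Q, Q i j * Q i j * Q i l * Q k l ∂μ = 0 := by
    refine hodd k _ (meas4 i j i j i l k l) fun Q => ?_
    show ((if i = k then (-1:ℝ) else 1) * Q i j) * ((if i = k then (-1:ℝ) else 1) * Q i j)
      * ((if i = k then (-1:ℝ) else 1) * Q i l) * ((if k = k then (-1:ℝ) else 1) * Q k l)
      = -(Q i j * Q i j * Q i l * Q k l)
    rw [if_neg hik, if_pos rfl]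
    ring
  have hZ7 : ∫ Q, Q i j * Q k j * Q i l * Q i l ∂μ = 0 := by
    refine hodd k _ (meas4 i j k j i l i l) fun Q => ?_
    show ((if i = k then (-1:ℝ) else 1) * Q i j) * ((if k = k then (-1:ℝ) else 1) * Q k j)
      * ((if i = k then (-1:ℝ) else 1) * Q i l) * ((if i = k then (-1:ℝ) else 1) * Q i l)
      = -(Q i j * Q k j * Q i l * Q i l)
    rw [if_neg hik, if_pos rfl]
    ring
  have hZ8 : ∫ Q, Q i j * Q k j * Q k l * Q k l ∂μ = 0 := by
    refine hodd i _ (meas4 i j k j k l k l) fun Q => ?_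
    show ((if i = i then (-1:ℝ) else 1) * Q i j) * ((if k = i then (-1:ℝ) else 1) * Q k j)
      * ((if k = i then (-1:ℝ) else 1) * Q k l) * ((if k = i then (-1:ℝ) else 1) * Q k l)
      = -(Q i j * Q k j * Q k l * Q k l)
    rw [if_neg (Ne.symm hik), if_pos rfl]
    ring
  have hZ9 : ∫ Q, Q k j * Q k j * Q i l * Q k l ∂μ = 0 := by
    refine hodd i _ (meas4 k j k j i l k l) fun Q => ?_
    show ((if k = i then (-1:ℝ) else 1) * Q k j) * ((if k = i then (-1:ℝ) else 1) * Q k j)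
      * ((if i = i then (-1:ℝ) else 1) * Q i l) * ((if k = i then (-1:ℝ) else 1) * Q k l)
      = -(Q k j * Q k j * Q i l * Q k l)
    rw [if_neg (Ne.symm hik), if_pos rfl]
    ring
  rw [hBrow k, hDpair k i (Ne.symm hik), hZ6, hZ7, hZ8, hZ9] at hrot3
  have e3 : (∫ Q, Q i j * Q i l * Q i j * Q i l ∂μ)
      = (∫ Q, Q i j * Q i j * Q k l * Q k l ∂μ)
        + 2 * (∫ Q, Q i j * Q i l * Q k j * Q k l ∂μ) := by
    linarith [hrot3]
  -- Conclusion
  have hM : (2:ℝ) ≤ (m:ℝ) := by exact_mod_cast hm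
  have hne : ((m:ℝ) - 1) * (m:ℝ) * ((m:ℝ) + 2) ≠ 0 := by
    have h1 : (0:ℝ) < (m:ℝ) - 1 := by linarith
    have h2 : (0:ℝ) < (m:ℝ) := by linarith
    have h3 : (0:ℝ) < (m:ℝ) + 2 := by linarith
    exact ne_of_gt (mul_pos (mul_pos h1 h2) h3)
  rw [eq_div_iff hne]
  linear_combination (m:ℝ) * e1 - e2 - ((m:ℝ)^2 - (m:ℝ)) * e3
end

section
/- (Matching Three Moments Theorem, deterministic eigenvalue version.) Let m be a positive integer, let μ be the Haar probability measure on the real orthogonal group O(m), and let A and B be m×m real diagonal matrices. Then for each j ∈ {1, 2, 3}, the j-th moment of the isotropic sum equals the j-th moment of the classical sum: (1/m) ∫_{O(m)} Tr((A + Qᵀ B Q)^j) dμ(Q) = (1/m!) Σ_π (1/m) Tr((A + P_πᵀ B P_π)^j), where the sum on the right is over all m! permutations π of {1,…,m} and P_π is the corresponding permutation matrix. -/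
/-!
For `j ≤ 3` every word of length `j` in two matrices `A`, `C` is cyclically equivalent to some
`A ^ p * C ^ q`, so for orthogonal `X` and diagonal `A`, `B` the trace `tr ((A + Xᵀ B X) ^ j)` is
an affine function of the Hadamard square `X ⊙ X`. Both averages of `X ⊙ X` are the flat matrix
with all entries `1 / m`. For permutation matrices `P ⊙ P = P`, and the average of `P k i` over
all permutations does not depend on `k`; for Haar-distributed `Q` the columns are unit vectors,
and invariance under row permutations makes the entries of a column equal in second moment.
-/

open MeasureTheory Matrix

namespace Matrix

variable {n R : Type*} [CommRing R]

theorem hadamard_permMatrix_self [DecidableEq n] (σ : Equiv.Perm n) :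
    σ.permMatrix R ⊙ σ.permMatrix R = σ.permMatrix R := by
  ext i j
  by_cases h : σ i = j <;> simp [hadamard_apply, PEquiv.toMatrix_apply, h]

variable [Fintype n]

theorem dotProduct_hadamard_self_mulVec (X : Matrix n n R) (f g : n → R) :
    g ⬝ᵥ (X ⊙ X) *ᵥ f = ∑ k, ∑ i, g k * f i * X k i ^ 2 := by
  simp only [dotProduct, mulVec, hadamard_apply, Finset.mul_sum]
  exact Finset.sum_congr rfl fun k _ => Finset.sum_congr rfl fun i _ => by ring

variable [DecidableEq n]

theorem transpose_permMatrix_mul_self (σ : Equiv.Perm n) :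
    (σ.permMatrix R)ᵀ * σ.permMatrix R = 1 := by
  rw [transpose_permMatrix, ← permMatrix_mul, mul_inv_cancel, permMatrix_one]

theorem sum_sq_apply_of_transpose_mul_self_eq_one {X : Matrix n n R} (hX : Xᵀ * X = 1) (i : n) :
    ∑ k, X k i ^ 2 = 1 := by
  simpa [mul_apply, sq] using congrFun (congrFun hX i) i

theorem trace_add_pow_of_le_three (A C : Matrix n n R) {j : ℕ} (hj : j ≤ 3) :
    ((A + C) ^ j).trace =
      ∑ p ∈ Finset.range (j + 1), j.choose p * (A ^ p * C ^ (j - p)).trace := by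
  interval_cases j
  · simp
  · simp [Finset.sum_range_succ, add_comm]
  · have h_expand : (A + C) ^ 2 = A ^ 2 + A * C + C * A + C ^ 2 := by noncomm_ring
    simp only [h_expand, trace_add, trace_mul_comm C A, Finset.sum_range_succ]
    norm_num
    ring
  · have h_expand : (A + C) ^ 3 = A ^ 3 + A ^ 2 * C + A * C * A + C * A ^ 2
        + A * C ^ 2 + C * A * C + C ^ 2 * A + C ^ 3 := by noncomm_ring
    simp only [h_expand, trace_add, Finset.sum_range_succ]
    rw [trace_mul_cycle A C A, trace_mul_cycle C A C, ← pow_two, ← pow_two,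
      trace_mul_comm C (A ^ 2), trace_mul_comm (C ^ 2) A]
    norm_num
    ring

variable {X : Matrix n n R}

theorem conj_diagonal_pow (hX : Xᵀ * X = 1) (b : n → R) (k : ℕ) :
    (Xᵀ * diagonal b * X) ^ k = Xᵀ * diagonal (b ^ k) * X := by
  induction k with
  | zero => rw [pow_zero, pow_zero, Pi.one_def, diagonal_one, Matrix.mul_one, hX]
  | succ k ih =>
    have hX' : X * Xᵀ = 1 := mul_eq_one_comm.mp hX
    calc (Xᵀ * diagonal b * X) ^ (k + 1)
        = Xᵀ * diagonal (b ^ k) * (X * Xᵀ) * diagonal b * X := by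
          rw [pow_succ, ih]; simp only [Matrix.mul_assoc]
      _ = Xᵀ * diagonal (b ^ (k + 1)) * X := by
          rw [hX', Matrix.mul_one, Matrix.mul_assoc _ _ (diagonal b), diagonal_mul_diagonal,
            pow_succ]
          rfl

theorem trace_diagonal_mul_conj_diagonal (f g : n → R) :
    (diagonal f * (Xᵀ * diagonal g * X)).trace = g ⬝ᵥ (X ⊙ X) *ᵥ f := by
  simp only [trace, diag_apply, diagonal_mul, dotProduct, mulVec, hadamard_apply, Finset.mul_sum]
  rw [Finset.sum_comm]
  refine Finset.sum_congr rfl fun i _ => ?_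
  rw [mul_apply, Finset.mul_sum]
  refine Finset.sum_congr rfl fun k _ => ?_
  rw [mul_diagonal, transpose_apply]
  ring

theorem trace_diagonal_add_conj_diagonal_pow (hX : Xᵀ * X = 1) (a b : n → R) {j : ℕ}
    (hj : j ≤ 3) :
    ((diagonal a + Xᵀ * diagonal b * X) ^ j).trace =
      ∑ p ∈ Finset.range (j + 1), j.choose p * (b ^ (j - p) ⬝ᵥ (X ⊙ X) *ᵥ a ^ p) := by
  rw [trace_add_pow_of_le_three _ _ hj]
  refine Finset.sum_congr rfl fun p _ => ?_
  rw [diagonal_pow, conj_diagonal_pow hX, trace_diagonal_mul_conj_diagonal]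

end Matrix

theorem Equiv.Perm.card_nsmul_sum_apply {α M : Type*} [Fintype α] [DecidableEq α]
    [AddCommMonoid M] (f : α → M) (a : α) :
    Fintype.card α • ∑ σ : Equiv.Perm α, f (σ a) = (Fintype.card α).factorial • ∑ x, f x := by
  have h_indep : ∀ b, ∑ σ : Equiv.Perm α, f (σ b) = ∑ σ : Equiv.Perm α, f (σ a) := fun b => by
    rw [← Equiv.sum_comp (Equiv.mulRight (Equiv.swap a b))]
    simp
  calc Fintype.card α • ∑ σ : Equiv.Perm α, f (σ a)
      = ∑ b, ∑ σ : Equiv.Perm α, f (σ b) := by simp [h_indep]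
    _ = ∑ σ : Equiv.Perm α, ∑ b, f (σ b) := Finset.sum_comm
    _ = (Fintype.card α).factorial • ∑ x, f x := by
      simp [Equiv.sum_comp, Fintype.card_perm]

section PermutationAverage

variable {n K : Type*} [Fintype n] [DecidableEq n] [Field K] [CharZero K]

theorem sum_perm_dotProduct_permMatrix_mulVec (f g : n → K) :
    ((Fintype.card n).factorial : K)⁻¹ * ∑ σ : Equiv.Perm n, g ⬝ᵥ σ.permMatrix K *ᵥ f =
      (∑ i, f i) * (∑ i, g i) / Fintype.card n := by
  rcases isEmpty_or_nonempty n with hn | hn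
  · simp
  have hcard : (Fintype.card n : K) ≠ 0 := Nat.cast_ne_zero.mpr Fintype.card_ne_zero
  have hsum : ∀ k, ∑ σ : Equiv.Perm n, f (σ k) =
      (Fintype.card n).factorial * (∑ i, f i) / Fintype.card n := fun k => by
    rw [eq_div_iff hcard, mul_comm, ← nsmul_eq_mul, Equiv.Perm.card_nsmul_sum_apply, nsmul_eq_mul]
  simp only [permMatrix_mulVec, dotProduct, Function.comp_apply]
  rw [Finset.sum_comm]
  simp only [← Finset.mul_sum, hsum]
  rw [← Finset.sum_mul]
  field_simp [Nat.factorial_ne_zero]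

theorem sum_perm_trace_diagonal_add_conj_diagonal_pow (a b : n → K) {j : ℕ} (hj : j ≤ 3) :
    ((Fintype.card n).factorial : K)⁻¹ * ∑ σ : Equiv.Perm n,
        ((diagonal a + (σ.permMatrix K)ᵀ * diagonal b * σ.permMatrix K) ^ j).trace =
      ∑ p ∈ Finset.range (j + 1),
        j.choose p * ((∑ i, a i ^ p) * (∑ i, b i ^ (j - p)) / Fintype.card n) := by
  simp only [trace_diagonal_add_conj_diagonal_pow (transpose_permMatrix_mul_self _) a b hj,
    hadamard_permMatrix_self]
  rw [Finset.sum_comm, Finset.mul_sum]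
  refine Finset.sum_congr rfl fun p _ => ?_
  rw [← Finset.mul_sum, mul_left_comm, sum_perm_dotProduct_permMatrix_mulVec]
  simp

end PermutationAverage

section Haar

variable {n : Type*} [Fintype n] [DecidableEq n] {μ : Measure (n → n → ℝ)}

theorem integrable_sq_apply [IsFiniteMeasure μ] (horth : ∀ᵐ Q ∂μ, (of Q)ᵀ * of Q = 1) (k i : n) :
    Integrable (fun Q : n → n → ℝ => Q k i ^ 2) μ := by
  refine .of_bound (Measurable.aestronglyMeasurable (by fun_prop)) 1 ?_
  filter_upwards [horth] with Q hQ
  rw [Real.norm_of_nonneg (sq_nonneg _), ← sum_sq_apply_of_transpose_mul_self_eq_one hQ i]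
  exact Finset.single_le_sum (f := fun k => of Q k i ^ 2) (fun _ _ => sq_nonneg _)
    (Finset.mem_univ k)

theorem integrable_dotProduct_hadamard_mulVec [IsFiniteMeasure μ]
    (horth : ∀ᵐ Q ∂μ, (of Q)ᵀ * of Q = 1) (f g : n → ℝ) :
    Integrable (fun Q : n → n → ℝ => g ⬝ᵥ (of Q ⊙ of Q) *ᵥ f) μ := by
  simp only [dotProduct_hadamard_self_mulVec]
  exact integrable_finsetSum _ fun k _ => integrable_finsetSum _ fun i _ =>
    (integrable_sq_apply horth k i).const_mul _

theorem integral_sq_apply_perm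
    (hperm : ∀ σ : Equiv.Perm n, μ.map (fun Q => of.symm (σ.permMatrix ℝ * of Q)) = μ)
    (σ : Equiv.Perm n) (k i : n) :
    ∫ Q, Q (σ k) i ^ 2 ∂μ = ∫ Q, Q k i ^ 2 ∂μ := by
  have hσ : (fun Q => of.symm (σ.permMatrix ℝ * of Q)) = fun Q r => Q (σ r) := by
    funext Q r c
    rw [Equiv.Perm.permMatrix, PEquiv.toMatrix_toPEquiv_mul]
    rfl
  conv_rhs => rw [← hperm σ, hσ]
  rw [integral_map (Measurable.aemeasurable (by fun_prop))
    (Measurable.aestronglyMeasurable (by fun_prop))]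

variable [IsProbabilityMeasure μ] (horth : ∀ᵐ Q ∂μ, (of Q)ᵀ * of Q = 1)
  (hperm : ∀ σ : Equiv.Perm n, μ.map (fun Q => of.symm (σ.permMatrix ℝ * of Q)) = μ)
include horth hperm

theorem integral_sq_apply (k i : n) : ∫ Q, Q k i ^ 2 ∂μ = (Fintype.card n : ℝ)⁻¹ := by
  have hcol : ∑ k', ∫ Q, Q k' i ^ 2 ∂μ = 1 := by
    rw [← integral_finsetSum _ fun k' _ => integrable_sq_apply horth k' i]
    have h_one : ∀ᵐ Q ∂μ, ∑ k', Q k' i ^ 2 = 1 :=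
      horth.mono fun Q hQ => sum_sq_apply_of_transpose_mul_self_eq_one hQ i
    simp [integral_congr_ae h_one]
  have hswap : ∀ k', ∫ Q, Q k' i ^ 2 ∂μ = ∫ Q, Q k i ^ 2 ∂μ := fun k' => by
    rw [← integral_sq_apply_perm hperm (Equiv.swap k k') k i, Equiv.swap_apply_left]
  simp only [hswap, Finset.sum_const, Finset.card_univ, nsmul_eq_mul] at hcol
  exact eq_inv_of_mul_eq_one_right hcol

theorem integral_dotProduct_hadamard_mulVec (f g : n → ℝ) :
    ∫ Q, g ⬝ᵥ (of Q ⊙ of Q) *ᵥ f ∂μ = (∑ i, f i) * (∑ i, g i) / Fintype.card n := by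
  simp only [dotProduct_hadamard_self_mulVec, of_apply]
  rw [integral_finsetSum _ fun k _ => integrable_finsetSum _ fun i _ =>
    (integrable_sq_apply horth k i).const_mul _]
  simp only [integral_finsetSum _ fun i _ => (integrable_sq_apply horth _ i).const_mul _,
    integral_const_mul, integral_sq_apply horth hperm]
  rw [Finset.sum_mul_sum, Finset.sum_comm, Finset.sum_div]
  simp only [Finset.sum_div]
  exact Finset.sum_congr rfl fun k _ => Finset.sum_congr rfl fun i _ => by ring

theorem integral_trace_diagonal_add_conj_diagonal_pow (a b : n → ℝ) {j : ℕ} (hj : j ≤ 3) :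
    ∫ Q, ((diagonal a + (of Q)ᵀ * diagonal b * of Q) ^ j).trace ∂μ =
      ∑ p ∈ Finset.range (j + 1),
        j.choose p * ((∑ i, a i ^ p) * (∑ i, b i ^ (j - p)) / Fintype.card n) := by
  rw [integral_congr_ae (horth.mono fun Q hQ => trace_diagonal_add_conj_diagonal_pow hQ a b hj),
    integral_finsetSum _ fun p _ =>
      (integrable_dotProduct_hadamard_mulVec horth _ _).const_mul _]
  refine Finset.sum_congr rfl fun p _ => ?_
  rw [integral_const_mul, integral_dotProduct_hadamard_mulVec horth hperm]
  simp

end Haar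

theorem matching_three_moments_general (m : ℕ)
    (μ : Measure (Fin m → Fin m → ℝ)) [IsProbabilityMeasure μ]
    (hsupp : μ {Q | (Matrix.of Q)ᵀ * Matrix.of Q = 1} = 1)
    (hinv : ∀ P : Matrix (Fin m) (Fin m) ℝ, Pᵀ * P = 1 →
      μ.map (fun Q => Matrix.of.symm (P * Matrix.of Q)) = μ)
    (a b : Fin m → ℝ) :
    ∀ j : ℕ, j ∈ ({1, 2, 3} : Finset ℕ) →
      (1 / (m : ℝ)) * ∫ Q, ((diagonal a +
          (Matrix.of Q)ᵀ * diagonal b * Matrix.of Q) ^ j).trace ∂μ =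
        (1 / (Nat.factorial m : ℝ)) * ∑ σ : Equiv.Perm (Fin m),
          (1 / (m : ℝ)) * ((diagonal a +
            (σ.permMatrix ℝ)ᵀ * diagonal b * σ.permMatrix ℝ) ^ j).trace := by
  intro j hj
  have hj3 : j ≤ 3 := by simp only [Finset.mem_insert, Finset.mem_singleton] at hj; omega
  have horth : ∀ᵐ Q ∂μ, (of Q)ᵀ * of Q = 1 :=
    (mem_ae_iff_prob_eq_one (isClosed_eq (by fun_prop) continuous_const).measurableSet).mpr hsupp
  have hperm σ := hinv _ (transpose_permMatrix_mul_self (R := ℝ) σ)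
  have h_avg := sum_perm_trace_diagonal_add_conj_diagonal_pow a b hj3
  rw [Fintype.card_fin] at h_avg
  rw [integral_trace_diagonal_add_conj_diagonal_pow horth hperm a b hj3, ← Finset.mul_sum,
    mul_left_comm, one_div (Nat.factorial m : ℝ), h_avg, Fintype.card_fin]

/-- **Matching Three Moments Theorem, deterministic eigenvalue
version.** For diagonal matrices `A = diagonal a`, `B = diagonal b` and the
Haar probability measure `μ` on `O(m)`, for each `j ∈ {1,2,3}` the `j`-th moment
of the isotropic sum `A + Qᵀ B Q` equals the `j`-th moment of the classical
(permutation-averaged) sum. -/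
theorem matching_three_moments (m : ℕ) (hm : 0 < m)
    (μ : Measure (Fin m → Fin m → ℝ)) [IsProbabilityMeasure μ]
    (hsupp : μ {Q | (Matrix.of Q)ᵀ * Matrix.of Q = 1} = 1)
    (hinv : ∀ P : Matrix (Fin m) (Fin m) ℝ, Pᵀ * P = 1 →
      μ.map (fun Q => Matrix.of.symm (P * Matrix.of Q)) = μ)
    (a b : Fin m → ℝ) :
    ∀ j : ℕ, j ∈ ({1, 2, 3} : Finset ℕ) →
      (1 / (m : ℝ)) * ∫ Q, ((diagonal a +
          (Matrix.of Q)ᵀ * diagonal b * Matrix.of Q) ^ j).trace ∂μ =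
        (1 / (Nat.factorial m : ℝ)) * ∑ σ : Equiv.Perm (Fin m),
          (1 / (m : ℝ)) * ((diagonal a +
            (σ.permMatrix ℝ)ᵀ * diagonal b * σ.permMatrix ℝ) ^ j).trace :=
  matching_three_moments_general m μ hsupp hinv a b
end

section
/- (Variance Lemma for the quantum eigenvector matrix, odd chain.) Let d ≥ 2 and k ≥ 1 be integers and set N = 2k+1. Let Q_1,…,Q_k, R_1,…,R_k be independent random matrices, each distributed according to the Haar probability measure on the real orthogonal group O(d²). Define the d^N × d^N matrices Q_A = (Q_1 ⊗ Q_2 ⊗ ⋯ ⊗ Q_k) ⊗ I_d and Q_B = I_d ⊗ (R_1 ⊗ R_2 ⊗ ⋯ ⊗ R_k), where ⊗ is the Kronecker product and I_d is the d×d identity, and set Q_q = Q_Aᵀ Q_B. Then every entry of Q_q has mean zero and variance d^{−N}: for all indices i, j, E[(Q_q)_{ij}] = 0 and E[((Q_q)_{ij})²] = d^{−N}. -/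
/-! Write `(Q_Aᵀ Q_B) x y = ∑ z, (Q_A) z x * (Q_B) z y`. The two factors depend on independent
families, and each is a product of single entries of independent Haar matrices times an indicator
for the site that the family does not act on. Invariance under `-1`, sign flips and permutations,
together with the unit norm of the columns, gives `E[Q a b] = 0` and
`E[Q a b * Q a' b] = δ a a' / d²`. Hence the mean vanishes, and in the second moment only the
diagonal pairs `z = w` survive, because the bonds of the two layers together determine a
configuration. Each of them contributes `d^(-4k)`, and there are `d^(2k-1)` of them, the sites `0`
and `2k` being pinned by `y` and `x`. -/

open MeasureTheory Matrix

/-- The `d^N × d^N` matrix `Q_A = (Q_1 ⊗ ⋯ ⊗ Q_k) ⊗ I_d` (for `N = 2k+1`),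
realized on the index set `Fin N → Fin d` of the `N`-fold tensor power basis:
the local matrix `Q i` acts on the pair of sites `(2i, 2i+1)` and the identity
acts on the last site `2k`. -/
noncomputable def kronOdd (d k : ℕ)
    (Q : Fin k → Matrix (Fin d × Fin d) (Fin d × Fin d) ℝ) :
    Matrix (Fin (2 * k + 1) → Fin d) (Fin (2 * k + 1) → Fin d) ℝ :=
  Matrix.of fun x y =>
    (∏ i : Fin k,
      Q i (x ⟨2 * i, by have := i.isLt; omega⟩, x ⟨2 * i + 1, by have := i.isLt; omega⟩)
          (y ⟨2 * i, by have := i.isLt; omega⟩, y ⟨2 * i + 1, by have := i.isLt; omega⟩)) *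
    (if x ⟨2 * k, by omega⟩ = y ⟨2 * k, by omega⟩ then (1 : ℝ) else 0)

/-- The `d^N × d^N` matrix `Q_B = I_d ⊗ (R_1 ⊗ ⋯ ⊗ R_k)` (for `N = 2k+1`):
the identity acts on site `0` and the local matrix `R i` acts on the pair of
sites `(2i+1, 2i+2)`. -/
noncomputable def kronEven (d k : ℕ)
    (R : Fin k → Matrix (Fin d × Fin d) (Fin d × Fin d) ℝ) :
    Matrix (Fin (2 * k + 1) → Fin d) (Fin (2 * k + 1) → Fin d) ℝ :=
  Matrix.of fun x y =>
    (if x ⟨0, by omega⟩ = y ⟨0, by omega⟩ then (1 : ℝ) else 0) *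
    ∏ i : Fin k,
      R i (x ⟨2 * i + 1, by have := i.isLt; omega⟩, x ⟨2 * i + 2, by have := i.isLt; omega⟩)
          (y ⟨2 * i + 1, by have := i.isLt; omega⟩, y ⟨2 * i + 2, by have := i.isLt; omega⟩)

section HaarMoments

variable {n : Type*} [Fintype n] [DecidableEq n] {μ : Measure (n → n → ℝ)}

lemma abs_apply_le_one_of_transpose_mul_self_eq_one {Q : Matrix n n ℝ} (hQ : Qᵀ * Q = 1)
    (a b : n) : |Q a b| ≤ 1 :=
  entry_norm_bound_of_unitary (mem_unitaryGroup_iff'.2 hQ) a b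

lemma integral_comp_orthogonal_mul
    (hinv : ∀ P : Matrix n n ℝ, Pᵀ * P = 1 → μ.map (fun Q => of.symm (P * of Q)) = μ)
    {P : Matrix n n ℝ} (hP : Pᵀ * P = 1) {f : (n → n → ℝ) → ℝ} (hf : Measurable f) :
    ∫ Q, f (of.symm (P * of Q)) ∂μ = ∫ Q, f Q ∂μ := by
  have hmul : Continuous fun Q : n → n → ℝ => of.symm (P * of Q) :=
    continuous_const.matrix_mul continuous_id
  conv_rhs => rw [← hinv P hP]
  exact (integral_map hmul.measurable.aemeasurable hf.aestronglyMeasurable).symm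

section Invariance

variable (hinv : ∀ P : Matrix n n ℝ, Pᵀ * P = 1 → μ.map (fun Q => of.symm (P * of Q)) = μ)
include hinv

lemma integral_entry_eq_zero (a b : n) : ∫ Q, Q a b ∂μ = 0 := by
  have hP : (-1 : Matrix n n ℝ)ᵀ * (-1) = 1 := by simp
  have h := integral_comp_orthogonal_mul hinv hP (f := fun Q => Q a b) (by fun_prop)
  simp [integral_neg] at h
  linarith

lemma integral_entry_mul_self_eq (a a' b : n) :
    ∫ Q, Q a b * Q a b ∂μ = ∫ Q, Q a' b * Q a' b ∂μ := by
  set σ := Equiv.swap a a'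
  have hP : (σ.permMatrix ℝ)ᵀ * σ.permMatrix ℝ = 1 := by
    rw [transpose_permMatrix, ← permMatrix_mul, mul_inv_cancel, permMatrix_one]
  have h := integral_comp_orthogonal_mul hinv hP (f := fun Q => Q a b * Q a b) (by fun_prop)
  simpa [σ, PEquiv.toMatrix_toPEquiv_mul] using h.symm

lemma integral_entry_mul_entry_of_ne {a a' : n} (haa' : a ≠ a') (b : n) :
    ∫ Q, Q a b * Q a' b ∂μ = 0 := by
  set P : Matrix n n ℝ := diagonal fun c => if c = a then -1 else 1
  have hP : Pᵀ * P = 1 := by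
    rw [diagonal_transpose, diagonal_mul_diagonal, ← diagonal_one]
    congr 1; ext c; split_ifs <;> norm_num
  have h := integral_comp_orthogonal_mul hinv hP (f := fun Q => Q a b * Q a' b) (by fun_prop)
  simp [P, diagonal_mul, haa'.symm, integral_neg] at h
  linarith

end Invariance

variable [IsProbabilityMeasure μ] (hsupp : μ {Q | (of Q)ᵀ * of Q = 1} = 1)
include hsupp

lemma ae_transpose_mul_self_eq_one : ∀ᵐ Q ∂μ, (of Q)ᵀ * of Q = 1 := by
  have hmeas : MeasurableSet {Q : n → n → ℝ | (of Q)ᵀ * of Q = 1} :=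
    (isClosed_eq (by fun_prop) continuous_const).measurableSet
  exact (ae_iff_measure_eq hmeas.nullMeasurableSet).2 (by rw [hsupp, measure_univ])

lemma integrable_entry (a b : n) : Integrable (fun Q => Q a b) μ := by
  refine .of_bound (by fun_prop : Measurable fun Q : n → n → ℝ => Q a b).aestronglyMeasurable 1 ?_
  filter_upwards [ae_transpose_mul_self_eq_one hsupp] with Q hQ
  exact abs_apply_le_one_of_transpose_mul_self_eq_one hQ a b

lemma integrable_entry_mul_entry (a b a' b' : n) :
    Integrable (fun Q => Q a b * Q a' b') μ := by
  refine .of_bound (by fun_prop) 1 ?_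
  filter_upwards [ae_transpose_mul_self_eq_one hsupp] with Q hQ
  rw [norm_mul, Real.norm_eq_abs, Real.norm_eq_abs]
  exact mul_le_one₀ (abs_apply_le_one_of_transpose_mul_self_eq_one hQ a b) (abs_nonneg _)
    (abs_apply_le_one_of_transpose_mul_self_eq_one hQ a' b')

variable (hinv : ∀ P : Matrix n n ℝ, Pᵀ * P = 1 → μ.map (fun Q => of.symm (P * of Q)) = μ)
include hinv

lemma integral_entry_mul_self (a b : n) :
    ∫ Q, Q a b * Q a b ∂μ = (Fintype.card n : ℝ)⁻¹ := by
  refine eq_inv_of_mul_eq_one_right ?_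
  calc (Fintype.card n : ℝ) * ∫ Q, Q a b * Q a b ∂μ
      = ∑ c, ∫ Q, Q c b * Q c b ∂μ := by
        rw [Finset.sum_congr rfl fun c _ => (integral_entry_mul_self_eq hinv a c b).symm]
        simp
    _ = ∫ Q, ∑ c, Q c b * Q c b ∂μ :=
        (integral_finsetSum _ fun c _ => integrable_entry_mul_entry hsupp c b c b).symm
    _ = ∫ _, 1 ∂μ := integral_congr_ae <| by
        filter_upwards [ae_transpose_mul_self_eq_one hsupp] with Q hQ
        simpa [mul_apply] using congrFun (congrFun hQ b) b
    _ = 1 := by simp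

lemma integral_entry_mul_entry (a a' b : n) :
    ∫ Q, Q a b * Q a' b ∂μ = if a = a' then (Fintype.card n : ℝ)⁻¹ else 0 := by
  split_ifs with h
  · subst h; exact integral_entry_mul_self hsupp hinv a b
  · exact integral_entry_mul_entry_of_ne hinv h b

end HaarMoments

section PiMoments

variable {ι n : Type*} [Fintype ι] [Fintype n] [DecidableEq n] {μ : Measure (n → n → ℝ)}
  [IsProbabilityMeasure μ] (hsupp : μ {Q | (of Q)ᵀ * of Q = 1} = 1)
  (hinv : ∀ P : Matrix n n ℝ, Pᵀ * P = 1 → μ.map (fun Q => of.symm (P * of Q)) = μ)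

include hsupp in
lemma integrable_pi_prod_entry (a b : ι → n) :
    Integrable (fun Qs : ι → n → n → ℝ => ∏ i, Qs i (a i) (b i)) (Measure.pi fun _ => μ) :=
  .fintype_prod fun i => integrable_entry hsupp (a i) (b i)

include hsupp in
lemma integrable_pi_prod_entry_mul (a b a' b' : ι → n) :
    Integrable (fun Qs : ι → n → n → ℝ => (∏ i, Qs i (a i) (b i)) * ∏ i, Qs i (a' i) (b' i))
      (Measure.pi fun _ => μ) := by
  simp_rw [← Finset.prod_mul_distrib]
  exact .fintype_prod fun i => integrable_entry_mul_entry hsupp (a i) (b i) (a' i) (b' i)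

include hinv in
lemma integral_pi_prod_entry_eq_zero [Nonempty ι] (a b : ι → n) :
    ∫ Qs : ι → n → n → ℝ, ∏ i, Qs i (a i) (b i) ∂(Measure.pi fun _ => μ) = 0 := by
  rw [integral_fintype_prod_eq_prod (E := fun _ : ι => n → n → ℝ) (fun i Q => Q (a i) (b i))]
  exact Finset.prod_eq_zero (Finset.mem_univ (Classical.arbitrary ι))
    (integral_entry_eq_zero hinv _ _)

include hsupp hinv in
lemma integral_pi_prod_entry_mul (a a' b : ι → n) :
    ∫ Qs : ι → n → n → ℝ, (∏ i, Qs i (a i) (b i)) * ∏ i, Qs i (a' i) (b i)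
        ∂(Measure.pi fun _ => μ) =
      if a = a' then (Fintype.card n : ℝ)⁻¹ ^ Fintype.card ι else 0 := by
  simp_rw [← Finset.prod_mul_distrib]
  rw [integral_fintype_prod_eq_prod (E := fun _ : ι => n → n → ℝ)
    (fun i Q => Q (a i) (b i) * Q (a' i) (b i))]
  simp_rw [integral_entry_mul_entry hsupp hinv, Fintype.prod_ite_zero, funext_iff,
    Finset.prod_const, Finset.card_univ]

end PiMoments

section BilinearSum

variable {ι Ω₁ Ω₂ : Type*} [Fintype ι] [MeasurableSpace Ω₁] [MeasurableSpace Ω₂]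
  {μ₁ : Measure Ω₁} {μ₂ : Measure Ω₂} [SigmaFinite μ₁] [SigmaFinite μ₂]
  {F : ι → Ω₁ → ℝ} {G : ι → Ω₂ → ℝ}

lemma integral_sum_mul_prod (hF : ∀ z, Integrable (F z) μ₁) (hG : ∀ z, Integrable (G z) μ₂) :
    ∫ ω, ∑ z, F z ω.1 * G z ω.2 ∂μ₁.prod μ₂ = ∑ z, (∫ ω, F z ω ∂μ₁) * ∫ ω, G z ω ∂μ₂ := by
  rw [integral_finsetSum _ fun z _ => (hF z).mul_prod (hG z)]
  simp_rw [integral_prod_mul]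

lemma integral_sum_mul_prod_sq (hF : ∀ z w, Integrable (fun ω => F z ω * F w ω) μ₁)
    (hG : ∀ z w, Integrable (fun ω => G z ω * G w ω) μ₂) :
    ∫ ω, (∑ z, F z ω.1 * G z ω.2) ^ 2 ∂μ₁.prod μ₂ =
      ∑ z, ∑ w, (∫ ω, F z ω * F w ω ∂μ₁) * ∫ ω, G z ω * G w ω ∂μ₂ := by
  have hsq : ∀ ω : Ω₁ × Ω₂, (∑ z, F z ω.1 * G z ω.2) ^ 2 =
      ∑ p : ι × ι, (F p.1 ω.1 * F p.2 ω.1) * (G p.1 ω.2 * G p.2 ω.2) := by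
    intro ω
    rw [sq, Finset.sum_mul_sum, ← Fintype.sum_prod_type']
    simp_rw [mul_mul_mul_comm]
  simp_rw [hsq]
  rw [integral_sum_mul_prod (F := fun (p : ι × ι) ω => F p.1 ω * F p.2 ω)
    (G := fun p ω => G p.1 ω * G p.2 ω) (fun p => hF p.1 p.2) (fun p => hG p.1 p.2),
    Fintype.sum_prod_type]

end BilinearSum

lemma sum_boole_apply_eq_mul_boole_apply_eq {ι α R : Type*} [Fintype ι] [DecidableEq ι]
    [Fintype α] [DecidableEq α] [CommSemiring R] {a b : ι} (hab : a ≠ b) (u v : α) :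
    ∑ z : ι → α, (if z a = u then (1 : R) else 0) * (if z b = v then 1 else 0) =
      (Fintype.card α : R) ^ (Fintype.card ι - 2) := by
  set g : ι → α → R := fun j t =>
    (if j = a then if t = u then 1 else 0 else 1) * (if j = b then if t = v then 1 else 0 else 1)
  have hsum : ∀ j, ∑ t, g j t = if j ∈ ({a, b} : Finset ι)ᶜ then (Fintype.card α : R) else 1 := by
    intro j
    by_cases hja : j = a
    · subst hja; simp [g, hab]
    · by_cases hjb : j = b
      · subst hjb; simp [g, hja]
      · simp [g, hja, hjb]
  calc ∑ z : ι → α, (if z a = u then (1 : R) else 0) * (if z b = v then 1 else 0)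
      = ∑ z : ι → α, ∏ j, g j (z j) := by
        simp only [g, Finset.prod_mul_distrib, Fintype.prod_ite_eq']
    _ = ∏ j, ∑ t, g j t := (Fintype.prod_sum g).symm
    _ = (Fintype.card α : R) ^ (Fintype.card ι - 2) := by
        rw [Fintype.prod_congr _ _ hsum, Finset.prod_ite_mem, Finset.univ_inter,
          Finset.prod_const, Finset.card_compl, Finset.card_pair hab]

section Bonds

variable {α : Type*} {k : ℕ}

def oddBond (z : Fin (2 * k + 1) → α) (i : Fin k) : α × α :=
  (z ⟨2 * i, by omega⟩, z ⟨2 * i + 1, by omega⟩)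

def evenBond (z : Fin (2 * k + 1) → α) (i : Fin k) : α × α :=
  (z ⟨2 * i + 1, by omega⟩, z ⟨2 * i + 2, by omega⟩)

lemma oddBond_evenBond_injective (hk : 1 ≤ k) :
    Function.Injective fun z : Fin (2 * k + 1) → α => (oddBond z, evenBond z) := by
  intro z w h
  simp only [Prod.mk.injEq, funext_iff, oddBond, evenBond] at h
  obtain ⟨hodd, heven⟩ := h
  funext ⟨j, hj⟩
  rcases Nat.even_or_odd' j with ⟨i, rfl | rfl⟩
  · by_cases hi : i < k
    · exact (hodd ⟨i, hi⟩).1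
    · convert (heven ⟨k - 1, by omega⟩).2 using 3 <;> simp only <;> omega
  · exact (hodd ⟨i, by omega⟩).2

lemma sum_sum_ite_oddBond_eq_mul_ite_evenBond_eq [Fintype α] [DecidableEq α] {R : Type*}
    [CommSemiring R] (hk : 1 ≤ k) (c c' : R)
    (f g : (Fin (2 * k + 1) → α) → (Fin (2 * k + 1) → α) → R) :
    ∑ z, ∑ w, ((if oddBond z = oddBond w then c else 0) * f z w) *
        (g z w * if evenBond z = evenBond w then c' else 0) =
      ∑ z, (c * f z z) * (g z z * c') := by
  refine Fintype.sum_congr _ _ fun z => ?_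
  rw [Fintype.sum_eq_single z fun w hwz => ?_]
  · simp
  · have hbonds := (oddBond_evenBond_injective (α := α) hk).ne hwz.symm
    simp only [ne_eq, Prod.mk.injEq, not_and_or] at hbonds
    rcases hbonds with h | h <;> simp [h]

end Bonds

lemma kronOdd_apply {d k : ℕ} (Q : Fin k → Matrix (Fin d × Fin d) (Fin d × Fin d) ℝ)
    (x y : Fin (2 * k + 1) → Fin d) :
    kronOdd d k Q x y = (∏ i, Q i (oddBond x i) (oddBond y i)) *
      if x (Fin.last _) = y (Fin.last _) then 1 else 0 := rfl

lemma kronEven_apply {d k : ℕ} (R : Fin k → Matrix (Fin d × Fin d) (Fin d × Fin d) ℝ)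
    (x y : Fin (2 * k + 1) → Fin d) :
    kronEven d k R x y = (if x 0 = y 0 then 1 else 0) *
      ∏ i, R i (evenBond x i) (evenBond y i) := rfl

section ChainMoments

variable {d k : ℕ} {μ : Measure ((Fin d × Fin d) → (Fin d × Fin d) → ℝ)} [IsProbabilityMeasure μ]
  (hsupp : μ {Q | (of Q)ᵀ * of Q = 1} = 1)
  (hinv : ∀ P : Matrix (Fin d × Fin d) (Fin d × Fin d) ℝ, Pᵀ * P = 1 →
    μ.map (fun Q => of.symm (P * of Q)) = μ)
  (x y z w : Fin (2 * k + 1) → Fin d)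

include hsupp in
lemma integrable_kronOdd_apply :
    Integrable (fun Qs => kronOdd d k (fun i => of (Qs i)) z x) (Measure.pi fun _ => μ) :=
  (integrable_pi_prod_entry hsupp _ _).mul_const _

include hsupp in
lemma integrable_kronEven_apply :
    Integrable (fun Rs => kronEven d k (fun i => of (Rs i)) z y) (Measure.pi fun _ => μ) :=
  (integrable_pi_prod_entry hsupp _ _).const_mul _

include hsupp in
lemma integrable_kronOdd_apply_mul :
    Integrable (fun Qs => kronOdd d k (fun i => of (Qs i)) z x *
      kronOdd d k (fun i => of (Qs i)) w x) (Measure.pi fun _ => μ) := by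
  simp_rw [kronOdd_apply, of_apply, mul_mul_mul_comm _ (ite _ _ _)]
  exact (integrable_pi_prod_entry_mul hsupp _ _ _ _).mul_const _

include hsupp in
lemma integrable_kronEven_apply_mul :
    Integrable (fun Rs => kronEven d k (fun i => of (Rs i)) z y *
      kronEven d k (fun i => of (Rs i)) w y) (Measure.pi fun _ => μ) := by
  simp_rw [kronEven_apply, of_apply, mul_mul_mul_comm _ (Finset.prod _ _)]
  exact (integrable_pi_prod_entry_mul hsupp _ _ _ _).const_mul _

include hinv in
lemma integral_kronOdd_apply_eq_zero (hk : 1 ≤ k) :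
    ∫ Qs, kronOdd d k (fun i => of (Qs i)) z x ∂(Measure.pi fun _ => μ) = 0 := by
  have : Nonempty (Fin k) := ⟨⟨0, hk⟩⟩
  simp_rw [kronOdd_apply, of_apply]
  rw [integral_mul_const, integral_pi_prod_entry_eq_zero hinv, zero_mul]

include hsupp hinv in
lemma integral_kronOdd_apply_mul :
    ∫ Qs, kronOdd d k (fun i => of (Qs i)) z x * kronOdd d k (fun i => of (Qs i)) w x
        ∂(Measure.pi fun _ => μ) =
      (if oddBond z = oddBond w then ((d : ℝ) ^ 2)⁻¹ ^ k else 0) *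
        ((if z (Fin.last _) = x (Fin.last _) then 1 else 0) *
          (if w (Fin.last _) = x (Fin.last _) then 1 else 0)) := by
  simp_rw [kronOdd_apply, of_apply, mul_mul_mul_comm _ (ite _ _ _)]
  rw [integral_mul_const, integral_pi_prod_entry_mul hsupp hinv]
  simp [sq]

include hsupp hinv in
lemma integral_kronEven_apply_mul :
    ∫ Rs, kronEven d k (fun i => of (Rs i)) z y * kronEven d k (fun i => of (Rs i)) w y
        ∂(Measure.pi fun _ => μ) =
      ((if z 0 = y 0 then 1 else 0) * (if w 0 = y 0 then 1 else 0)) *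
        (if evenBond z = evenBond w then ((d : ℝ) ^ 2)⁻¹ ^ k else 0) := by
  simp_rw [kronEven_apply, of_apply, mul_mul_mul_comm _ (Finset.prod _ _)]
  rw [integral_const_mul, integral_pi_prod_entry_mul hsupp hinv]
  simp [sq]

end ChainMoments

/-- **Variance Lemma for the quantum eigenvector matrix, odd
chain.** Let `N = 2k+1` and let `Q_1,…,Q_k, R_1,…,R_k` be independent
Haar-distributed matrices on the real orthogonal group `O(d²)` (here `μ0` is
the Haar probability measure on `d² × d²` real matrices, characterized as the
probability measure supported on the orthogonal matrices and invariant under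
left multiplication by orthogonal matrices, and the joint law is the product
measure).  With `Q_A = (Q_1 ⊗ ⋯ ⊗ Q_k) ⊗ I_d`, `Q_B = I_d ⊗ (R_1 ⊗ ⋯ ⊗ R_k)`
and `Q_q = Q_Aᵀ Q_B`, every entry of `Q_q` has mean `0` and variance `d^{-N}`. -/
theorem quantum_eigenvector_matrix_mean_variance (d k : ℕ) (hd : 2 ≤ d) (hk : 1 ≤ k)
    (μ0 : Measure ((Fin d × Fin d) → (Fin d × Fin d) → ℝ))
    [IsProbabilityMeasure μ0]
    (hsupp : μ0 {Q | (Matrix.of Q)ᵀ * Matrix.of Q = 1} = 1)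
    (hinv : ∀ P : Matrix (Fin d × Fin d) (Fin d × Fin d) ℝ, Pᵀ * P = 1 →
      μ0.map (fun Q => Matrix.of.symm (P * Matrix.of Q)) = μ0)
    (x y : Fin (2 * k + 1) → Fin d) :
    (∫ ω : (Fin k → (Fin d × Fin d) → (Fin d × Fin d) → ℝ) ×
           (Fin k → (Fin d × Fin d) → (Fin d × Fin d) → ℝ),
        ((kronOdd d k fun i => Matrix.of (ω.1 i))ᵀ *
          kronEven d k (fun i => Matrix.of (ω.2 i))) x y
        ∂((Measure.pi fun _ : Fin k => μ0).prod (Measure.pi fun _ : Fin k => μ0)) = 0) ∧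
    (∫ ω : (Fin k → (Fin d × Fin d) → (Fin d × Fin d) → ℝ) ×
           (Fin k → (Fin d × Fin d) → (Fin d × Fin d) → ℝ),
        (((kronOdd d k fun i => Matrix.of (ω.1 i))ᵀ *
          kronEven d k (fun i => Matrix.of (ω.2 i))) x y) ^ 2
        ∂((Measure.pi fun _ : Fin k => μ0).prod (Measure.pi fun _ : Fin k => μ0)) =
      ((d : ℝ) ^ (2 * k + 1))⁻¹) := by
  simp only [mul_apply, transpose_apply]
  refine ⟨?_, ?_⟩
  · rw [integral_sum_mul_prod (integrable_kronOdd_apply hsupp x)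
      (integrable_kronEven_apply hsupp y)]
    simp [integral_kronOdd_apply_eq_zero hinv _ _ hk]
  · rw [integral_sum_mul_prod_sq (integrable_kronOdd_apply_mul hsupp x)
      (integrable_kronEven_apply_mul hsupp y)]
    simp_rw [integral_kronOdd_apply_mul hsupp hinv, integral_kronEven_apply_mul hsupp hinv,
      sum_sum_ite_oddBond_eq_mul_ite_evenBond_eq hk]
    have hlast : Fin.last (2 * k) ≠ 0 := by simp [Fin.ext_iff]; omega
    have hd0 : (d : ℝ) ≠ 0 := Nat.cast_ne_zero.2 (by omega)
    calc _ = ((d : ℝ) ^ 2)⁻¹ ^ (2 * k) * ∑ z : Fin (2 * k + 1) → Fin d,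
          (if z (Fin.last _) = x (Fin.last _) then 1 else 0) * (if z 0 = y 0 then 1 else 0) := by
          rw [Finset.mul_sum]
          refine Fintype.sum_congr _ _ fun z => ?_
          split_ifs <;> ring
      _ = ((d : ℝ) ^ 2)⁻¹ ^ (2 * k) * (d : ℝ) ^ (2 * k + 1 - 2) := by
          rw [sum_boole_apply_eq_mul_boole_apply_eq hlast, Fintype.card_fin, Fintype.card_fin]
      _ = ((d : ℝ) ^ (2 * k + 1))⁻¹ := by
          rw [inv_pow, ← pow_mul, inv_mul_eq_iff_eq_mul₀ (pow_ne_zero _ hd0), ← div_eq_mul_inv,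
            eq_div_iff (pow_ne_zero _ hd0), ← pow_add]
          congr 1
          omega
end

section
/- (Entangled projector trace identity II.) Let d be a positive integer and let u and v be d×d real matrices. Index d³-dimensional matrices by triples (i₁,i₂,i₃) ∈ {1,…,d}³, and define M₁ and M₂ by (M₁)_{(i₁,i₂,i₃),(j₁,j₂,j₃)} = u_{i₁ i₂} u_{j₁ j₂} δ_{i₃ j₃} and (M₂)_{(i₁,i₂,i₃),(j₁,j₂,j₃)} = δ_{i₁ j₁} v_{i₂ i₃} v_{j₂ j₃} (so M₁ = (vec(u) vec(u)ᵀ) ⊗ I_d and M₂ = I_d ⊗ (vec(v) vec(v)ᵀ) under the natural identifications). Then Tr((M₁ M₂)²) = Tr( ((u v)(u v)ᵀ)² ) = ‖(u v)(u v)ᵀ‖_F². -/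
open Matrix

/-- **entangled projector trace identity II.** For `d × d` real
matrices `u, v`, with `M₁ = (vec u)(vec u)ᵀ ⊗ I_d` and
`M₂ = I_d ⊗ (vec v)(vec v)ᵀ` (written entrywise on the index set
`Fin d × Fin d × Fin d`), one has
`Tr((M₁ M₂)²) = Tr(((uv)(uv)ᵀ)²) = ‖(uv)(uv)ᵀ‖_F²`. -/
theorem entangled_projector_trace_II (d : ℕ) (u v : Matrix (Fin d) (Fin d) ℝ)
    (M₁ M₂ : Matrix (Fin d × Fin d × Fin d) (Fin d × Fin d × Fin d) ℝ)
    (hM₁ : M₁ = Matrix.of fun p q =>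
      u p.1 p.2.1 * u q.1 q.2.1 * (if p.2.2 = q.2.2 then (1 : ℝ) else 0))
    (hM₂ : M₂ = Matrix.of fun p q =>
      (if p.1 = q.1 then (1 : ℝ) else 0) * (v p.2.1 p.2.2 * v q.2.1 q.2.2)) :
    ((M₁ * M₂) ^ 2).trace = (((u * v) * (u * v)ᵀ) ^ 2).trace ∧
    (((u * v) * (u * v)ᵀ) ^ 2).trace =
      (((u * v) * (u * v)ᵀ) * ((u * v) * (u * v)ᵀ)ᵀ).trace := by
  have hprod : M₁ * M₂ = Matrix.of fun p q =>
      u p.1 p.2.1 * ((u * v) q.1 p.2.2 * v q.2.1 q.2.2) := by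
    subst hM₁ hM₂
    ext p q
    simp only [Matrix.mul_apply, Matrix.of_apply, Fintype.sum_prod_type]
    rw [Finset.sum_eq_single q.1]
    · simp only [if_pos rfl, mul_one, one_mul, mul_ite, mul_zero, ite_mul, zero_mul,
        Finset.sum_ite_eq, Finset.sum_ite_eq', Finset.mem_univ, if_true,
        Matrix.mul_apply, Finset.mul_sum, Finset.sum_mul]
      exact Finset.sum_congr rfl fun r2 _ => by ring
    · intro b _ hb
      simp [if_neg hb]
    · simp
  constructor
  · rw [hprod]
    set A := u * v with hAdef
    have key : ∀ i k : Fin d, (∑ a, ∑ b, u i a * v a b * A k b) = ∑ j, A i j * A k j := by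
      intro i k
      rw [Finset.sum_comm]
      refine Finset.sum_congr rfl fun b _ => ?_
      rw [show A i b = ∑ a, u i a * v a b from by rw [hAdef, Matrix.mul_apply],
        Finset.sum_mul]
    rw [pow_two, pow_two, Matrix.trace, Matrix.trace]
    simp only [Matrix.diag, Matrix.mul_apply, Matrix.of_apply, Matrix.transpose_apply,
      Fintype.sum_prod_type]
    calc
      ∑ p1, ∑ p2, ∑ p3, ∑ q1, ∑ q2, ∑ q3,
          (u p1 p2 * (A q1 p3 * v q2 q3)) * (u q1 q2 * (A p1 q3 * v p2 p3))
        = ∑ p1, ∑ p2, ∑ q1, ∑ p3, ∑ q2, ∑ q3,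
          (u p1 p2 * (A q1 p3 * v q2 q3)) * (u q1 q2 * (A p1 q3 * v p2 p3)) := by
          exact Finset.sum_congr rfl fun p1 _ => Finset.sum_congr rfl fun p2 _ =>
            Finset.sum_comm
      _ = ∑ p1, ∑ q1, ∑ p2, ∑ p3, ∑ q2, ∑ q3,
          (u p1 p2 * (A q1 p3 * v q2 q3)) * (u q1 q2 * (A p1 q3 * v p2 p3)) := by
          exact Finset.sum_congr rfl fun p1 _ => Finset.sum_comm
      _ = ∑ p1, ∑ q1, (∑ p2, ∑ p3, u p1 p2 * v p2 p3 * A q1 p3) *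
            (∑ q2, ∑ q3, u q1 q2 * v q2 q3 * A p1 q3) := by
          refine Finset.sum_congr rfl fun p1 _ => Finset.sum_congr rfl fun q1 _ => ?_
          rw [Finset.sum_mul_sum]
          refine Finset.sum_congr rfl fun p2 _ => ?_
          rw [Finset.sum_comm]
          refine Finset.sum_congr rfl fun q2 _ => ?_
          rw [Finset.sum_mul_sum]
          refine Finset.sum_congr rfl fun p3 _ => Finset.sum_congr rfl fun q3 _ => by ring
      _ = ∑ p1, ∑ q1, (∑ j, A p1 j * A q1 j) * (∑ j, A q1 j * A p1 j) := by
          refine Finset.sum_congr rfl fun p1 _ => Finset.sum_congr rfl fun q1 _ => ?_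
          rw [key, key]
  · rw [show ((u * v) * (u * v)ᵀ)ᵀ = (u * v) * (u * v)ᵀ from by
      rw [Matrix.transpose_mul, Matrix.transpose_transpose], pow_two]
end

section
/- (Expected trace of the fourth power of a product of independent Wishart matrices, β = 1.) Let d be a positive integer and let G₁ and G₂ be independent d×d random matrices whose entries are independent standard Gaussian (mean 0, variance 1) random variables. Set W₁ = G₁ᵀ G₁ and W₂ = G₂ᵀ G₂. Then E[ Tr(W₁ W₂ W₁ W₂) ] = 3 d³ (d² + d + 1). -/
/-!
Expanding the trace, `E[Tr(W₁W₂W₁W₂)] = ∑ E[(W₁)ᵢⱼ(W₁)ₖₗ] E[(W₂)ⱼₖ(W₂)ₗᵢ]` by independence, so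
everything reduces to the second moments of a Wishart matrix `W = GᵀG` with `G` an `n × d`
standard Gaussian matrix: `E[WᵢⱼWₖₗ] = n² δᵢⱼδₖₗ + n δᵢₖδⱼₗ + n δᵢₗδⱼₖ`. These follow from the
four-point Wick formula for i.i.d. standard Gaussians, which in turn comes from Gaussian
integration by parts `E[xₚ xᵐ] = mₚ E[xᵐ⁻ᵉᵖ]` on monomials, itself a consequence of the
one-dimensional recursion `E[x^(n+2)] = (n+1) v E[xⁿ]`. Summing the delta products gives
`d³(3d² + 3d + 3)` for `n = d`.
-/

open MeasureTheory ProbabilityTheory Matrix Real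
open scoped NNReal

lemma integrable_pow_gaussianReal (μ : ℝ) (v : ℝ≥0) (n : ℕ) :
    Integrable (fun x : ℝ => x ^ n) (gaussianReal μ v) :=
  ((memLp_id_gaussianReal n).integrable_norm_pow').mono' (by fun_prop)
    (ae_of_all _ fun x => by simp [norm_pow])

lemma integrable_gaussianPDFReal_mul_pow (μ : ℝ) {v : ℝ≥0} (hv : v ≠ 0) (n : ℕ) :
    Integrable fun x : ℝ => gaussianPDFReal μ v x * x ^ n := by
  have h := integrable_pow_gaussianReal μ v n
  rw [gaussianReal_of_var_ne_zero _ hv, integrable_withDensity_iff_integrable_smul'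
    (measurable_gaussianPDF _ _) (ae_of_all _ fun _ => gaussianPDF_lt_top)] at h
  simpa only [toReal_gaussianPDF, smul_eq_mul] using h

lemma hasDerivAt_gaussianPDFReal (μ : ℝ) (v : ℝ≥0) (x : ℝ) :
    HasDerivAt (gaussianPDFReal μ v) (-((x - μ) / v) * gaussianPDFReal μ v x) x := by
  have h : HasDerivAt (fun y : ℝ => -(y - μ) ^ 2 / (2 * v)) (-(2 * (x - μ)) / (2 * v)) x := by
    simpa using (((hasDerivAt_id x).sub_const μ).pow 2).neg.div_const (2 * (v : ℝ))
  have hpdf : gaussianPDFReal μ v = fun y => (√(2 * π * v))⁻¹ * rexp (-(y - μ) ^ 2 / (2 * v)) :=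
    rfl
  rw [hpdf]
  exact (h.exp.const_mul _).congr_deriv (by ring)

lemma integral_pow_add_two_gaussianReal (v : ℝ≥0) (n : ℕ) :
    ∫ x, x ^ (n + 2) ∂gaussianReal 0 v = (n + 1) * v * ∫ x, x ^ n ∂gaussianReal 0 v := by
  rcases eq_or_ne v 0 with rfl | hv
  · simp [gaussianReal_zero_var]
  simp_rw [integral_gaussianReal_eq_integral_smul hv, smul_eq_mul]
  set φ := gaussianPDFReal 0 v
  have hint := integrable_gaussianPDFReal_mul_pow 0 hv
  -- Gaussian integration by parts: `φ' = -(x / v) φ`.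
  have hparts := integral_mul_deriv_eq_deriv_mul_of_integrable
    (u := fun x : ℝ => x ^ (n + 1)) (u' := fun x => (n + 1 : ℝ) * x ^ n)
    (fun x _ => by simpa using hasDerivAt_pow (n + 1) x)
    (fun x _ => hasDerivAt_gaussianPDFReal 0 v x)
    (((hint (n + 2)).const_mul (-(v : ℝ)⁻¹)).congr (ae_of_all _ fun x => by
      simp only [Pi.mul_apply]; ring))
    (((hint n).const_mul (n + 1 : ℝ)).congr (ae_of_all _ fun x => by
      simp only [Pi.mul_apply]; ring))
    ((hint (n + 1)).congr (ae_of_all _ fun x => by simp only [Pi.mul_apply]; ring))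
  have hlhs :
      ∫ x, x ^ (n + 1) * (-((x - 0) / v) * φ x) = -(v : ℝ)⁻¹ * ∫ x, φ x * x ^ (n + 2) := by
    rw [← integral_const_mul]; congr 1; ext x; ring
  have hrhs : ∫ x, (n + 1 : ℝ) * x ^ n * φ x = (n + 1) * ∫ x, φ x * x ^ n := by
    rw [← integral_const_mul]; congr 1; ext x; ring
  rw [hlhs, hrhs] at hparts
  field_simp at hparts
  linarith

section Monomial

variable {ι : Type*} [Fintype ι]

lemma integrable_prod_pow_pi_gaussianReal (m : ι → ℕ) :
    Integrable (fun x => ∏ c, x c ^ m c) (Measure.pi fun _ : ι => gaussianReal 0 1) :=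
  Integrable.fintype_prod fun c => integrable_pow_gaussianReal 0 1 (m c)

lemma integral_prod_pow_pi_gaussianReal (m : ι → ℕ) :
    ∫ x, ∏ c, x c ^ m c ∂(Measure.pi fun _ : ι => gaussianReal 0 1) =
      ∏ c, ∫ t, t ^ m c ∂gaussianReal 0 1 :=
  integral_fintype_prod_eq_prod fun c t => t ^ m c

variable [DecidableEq ι]

lemma prod_pow_single {M : Type*} [CommMonoid M] (x : ι → M) (q : ι) :
    ∏ c, x c ^ (Pi.single q 1 : ι → ℕ) c = x q := by
  rw [Fintype.prod_eq_single q fun c hc => by simp [hc]]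
  simp

lemma prod_pow_add_single {M : Type*} [CommMonoid M] (x : ι → M) (m : ι → ℕ) (q : ι) :
    ∏ c, x c ^ (m + Pi.single q 1 : ι → ℕ) c = (∏ c, x c ^ m c) * x q := by
  simp only [Pi.add_apply, pow_add, Finset.prod_mul_distrib, prod_pow_single]

/-- Gaussian integration by parts on monomials. When `m p = 0` the truncated subtraction
`m - Pi.single p 1` is just `m`, and both sides vanish. -/
lemma integral_mul_prod_pow_pi_gaussianReal (m : ι → ℕ) (p : ι) :
    ∫ x, x p * ∏ c, x c ^ m c ∂(Measure.pi fun _ : ι => gaussianReal 0 1) =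
      m p * ∫ x, ∏ c, x c ^ (m - Pi.single p 1 : ι → ℕ) c
        ∂(Measure.pi fun _ : ι => gaussianReal 0 1) := by
  simp_rw [mul_comm (_ : ℝ) (∏ c, _), ← prod_pow_add_single]
  rw [integral_prod_pow_pi_gaussianReal, integral_prod_pow_pi_gaussianReal,
    Fintype.prod_eq_mul_prod_compl p, Fintype.prod_eq_mul_prod_compl p]
  have hrest : ∀ k : ι → ℕ, (∀ c ≠ p, k c = m c) →
      ∏ c ∈ {p}ᶜ, ∫ t, t ^ k c ∂gaussianReal 0 1 = ∏ c ∈ {p}ᶜ, ∫ t, t ^ m c ∂gaussianReal 0 1 :=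
    fun k hk => Finset.prod_congr rfl fun c hc => by rw [hk c (by simpa using hc)]
  rw [hrest (m + Pi.single p 1) fun c hc => by simp [hc],
    hrest (m - Pi.single p 1) fun c hc => by simp [hc], ← mul_assoc]
  congr 1
  simp only [Pi.add_apply, Pi.sub_apply, Pi.single_eq_same]
  rcases m p with _ | k
  · simp
  · simpa using integral_pow_add_two_gaussianReal 1 k

lemma integral_mul_pi_gaussianReal (p q : ι) :
    ∫ x, x p * x q ∂(Measure.pi fun _ : ι => gaussianReal 0 1) = if p = q then 1 else 0 := by
  simp_rw [← prod_pow_single _ q]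
  rw [integral_mul_prod_pow_pi_gaussianReal]
  split_ifs with hpq
  · subst hpq
    simp
  · simp [Pi.single_apply, hpq]

lemma mul_mul_mul_eq_mul_prod_pow {M : Type*} [CommMonoid M] (x : ι → M) (p q r s : ι) :
    x p * x q * x r * x s =
      x p * ∏ c, x c ^ (Pi.single q 1 + Pi.single r 1 + Pi.single s 1 : ι → ℕ) c := by
  rw [prod_pow_add_single, prod_pow_add_single, prod_pow_single, mul_assoc, mul_assoc, mul_assoc]

lemma integrable_mul_mul_mul_pi_gaussianReal (p q r s : ι) :
    Integrable (fun x => x p * x q * x r * x s) (Measure.pi fun _ : ι => gaussianReal 0 1) := by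
  simp_rw [mul_mul_mul_eq_mul_prod_pow, mul_comm (_ : ℝ) (∏ c, _), ← prod_pow_add_single]
  exact integrable_prod_pow_pi_gaussianReal _

lemma integral_mul_mul_mul_pi_gaussianReal (p q r s : ι) :
    ∫ x, x p * x q * x r * x s ∂(Measure.pi fun _ : ι => gaussianReal 0 1) =
      (if p = q then 1 else 0) * (if r = s then 1 else 0) +
        (if p = r then 1 else 0) * (if q = s then 1 else 0) +
        (if p = s then 1 else 0) * (if q = r then 1 else 0) := by
  set F : (ι → ℕ) → ℝ :=
    fun m => ∫ x, ∏ c, x c ^ m c ∂(Measure.pi fun _ : ι => gaussianReal 0 1)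
  have hF : ∀ a b, F (Pi.single a 1 + Pi.single b 1) = if a = b then 1 else 0 := fun a b => by
    simp only [F, prod_pow_add_single, prod_pow_single, integral_mul_pi_gaussianReal]
  -- product rule: each factor `x t` with `t = p` is differentiated in turn
  have hsingle : ∀ t (m : ι → ℕ), ((Pi.single t 1 : ι → ℕ) p : ℝ) * F (m - Pi.single p 1) =
      (if p = t then 1 else 0) * F (m - Pi.single t 1) := fun t m => by
    by_cases hpt : p = t
    · subst hpt; simp
    · simp [hpt]
  simp_rw [mul_mul_mul_eq_mul_prod_pow]
  rw [integral_mul_prod_pow_pi_gaussianReal]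
  change _ * F _ = _
  simp only [Pi.add_apply, Nat.cast_add, add_mul, hsingle]
  have hq : ∀ a b c : ι → ℕ, a + b + c - a = b + c := fun a b c => by
    rw [add_assoc, add_tsub_cancel_left]
  have hr : ∀ a b c : ι → ℕ, a + b + c - b = a + c := fun a b c => by
    rw [add_right_comm, add_tsub_cancel_right]
  rw [hq, hr, add_tsub_cancel_right, hF, hF, hF]

end Monomial

lemma integral_trace_mul_mul_mul_eq_sum {ι Ω : Type*} [Fintype ι] [MeasurableSpace Ω]
    (μ : Measure Ω) (A B C D : Ω → Matrix ι ι ℝ)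
    (h : ∀ i j k l, Integrable (fun ω => A ω i j * C ω k l * (B ω j k * D ω l i)) μ) :
    ∫ ω, (A ω * B ω * C ω * D ω).trace ∂μ =
      ∑ i, ∑ l, ∑ k, ∑ j, ∫ ω, A ω i j * C ω k l * (B ω j k * D ω l i) ∂μ := by
  have htr : ∀ ω, (A ω * B ω * C ω * D ω).trace =
      ∑ i, ∑ l, ∑ k, ∑ j, A ω i j * C ω k l * (B ω j k * D ω l i) := fun ω => by
    simp only [trace, diag, mul_apply, Finset.sum_mul]
    exact Finset.sum_congr rfl fun i _ => Finset.sum_congr rfl fun l _ =>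
      Finset.sum_congr rfl fun k _ => Finset.sum_congr rfl fun j _ => by ring
  simp_rw [htr, ← Fintype.sum_prod_type']
  exact integral_finsetSum _ fun x _ => h _ _ _ _

section Wishart

variable {κ ι : Type*} [Fintype κ] [Fintype ι]

lemma measurePreserving_curry_pi {X : Type*} [MeasurableSpace X] (μ : Measure X)
    [IsProbabilityMeasure μ] :
    MeasurePreserving (MeasurableEquiv.curry κ ι X) (Measure.pi fun _ : κ × ι => μ)
      (Measure.pi fun _ : κ => Measure.pi fun _ : ι => μ) := by
  refine ⟨(MeasurableEquiv.curry κ ι X).measurable, ?_⟩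
  simpa only [Measure.infinitePi_eq_pi] using Measure.infinitePi_map_curry fun (_ : κ) (_ : ι) => μ

variable (κ ι) in
noncomputable abbrev gaussianMatrix : Measure (κ → ι → ℝ) :=
  Measure.pi fun _ : κ => Measure.pi fun _ : ι => gaussianReal 0 1

def wishart (g : κ → ι → ℝ) : Matrix ι ι ℝ := (of g)ᵀ * of g

omit [Fintype κ] in
def wishartSecondMoment [DecidableEq ι] (n : ℝ) (i j k l : ι) : ℝ :=
  n ^ 2 * (if i = j then 1 else 0) * (if k = l then 1 else 0) +
    n * (if i = k then 1 else 0) * (if j = l then 1 else 0) +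
    n * (if i = l then 1 else 0) * (if j = k then 1 else 0)

omit [Fintype ι] in
lemma wishart_apply_mul_wishart_apply (g : κ → ι → ℝ) (i j k l : ι) :
    wishart g i j * wishart g k l = ∑ a, ∑ b, g a i * g a j * g b k * g b l := by
  simp only [wishart, mul_apply, transpose_apply, of_apply, Finset.sum_mul_sum, mul_assoc]

lemma integrable_wishart_apply_mul_wishart_apply (i j k l : ι) :
    Integrable (fun g => wishart g i j * wishart g k l) (gaussianMatrix κ ι) := by
  classical
  simp_rw [wishart_apply_mul_wishart_apply]
  refine integrable_finsetSum _ fun a _ => integrable_finsetSum _ fun b _ => ?_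
  rw [← (measurePreserving_curry_pi _).integrable_comp_emb (MeasurableEquiv.measurableEmbedding _)]
  exact integrable_mul_mul_mul_pi_gaussianReal (a, i) (a, j) (b, k) (b, l)

lemma integral_wishart_apply_mul_wishart_apply [DecidableEq ι] (i j k l : ι) :
    ∫ g, wishart g i j * wishart g k l ∂(gaussianMatrix κ ι) =
      wishartSecondMoment (Fintype.card κ) i j k l := by
  classical
  simp_rw [wishart_apply_mul_wishart_apply]
  rw [← (measurePreserving_curry_pi _).integral_comp']
  simp only [MeasurableEquiv.coe_curry, Function.curry_apply]
  rw [integral_finsetSum _ fun a _ => integrable_finsetSum _ fun b _ =>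
    integrable_mul_mul_mul_pi_gaussianReal (a, i) (a, j) (b, k) (b, l)]
  simp_rw [integral_finsetSum _ fun b _ =>
    integrable_mul_mul_mul_pi_gaussianReal (_, i) (_, j) (b, k) (b, l)]
  simp [integral_mul_mul_mul_pi_gaussianReal, wishartSecondMoment, ite_and,
    Finset.sum_add_distrib, sq]

omit [Fintype κ] in
lemma sum_wishartSecondMoment_mul_wishartSecondMoment [DecidableEq ι] (m n : ℝ) :
    ∑ i : ι, ∑ l : ι, ∑ k : ι, ∑ j : ι,
        wishartSecondMoment m i j k l * wishartSecondMoment n j k l i =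
      m * n * Fintype.card ι * (m * n + m + n + 3) +
        m * n * Fintype.card ι ^ 2 * (m + n + 1) := by
  simp only [wishartSecondMoment, mul_ite, mul_one, mul_zero, mul_add, add_mul, ite_mul, zero_mul,
    Finset.sum_add_distrib, Finset.sum_ite_irrel, Finset.sum_ite_eq', Finset.sum_ite_eq,
    Finset.mem_univ, ↓reduceIte, Finset.sum_const_zero, Finset.sum_const, Finset.card_univ,
    nsmul_eq_mul]
  ring

end Wishart

theorem integral_trace_wishart_mul_wishart_mul_wishart_mul_wishart
    {κ₁ κ₂ ι : Type*} [Fintype κ₁] [Fintype κ₂] [Fintype ι] :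
    ∫ g, (wishart g.1 * wishart g.2 * wishart g.1 * wishart g.2).trace
        ∂((gaussianMatrix κ₁ ι).prod (gaussianMatrix κ₂ ι)) =
      Fintype.card κ₁ * Fintype.card κ₂ * Fintype.card ι *
          (Fintype.card κ₁ * Fintype.card κ₂ + Fintype.card κ₁ + Fintype.card κ₂ + 3) +
        Fintype.card κ₁ * Fintype.card κ₂ * Fintype.card ι ^ 2 *
          (Fintype.card κ₁ + Fintype.card κ₂ + 1) := by
  classical
  have hint : ∀ i j k l : ι, Integrable
      (fun g => wishart g.1 i j * wishart g.1 k l * (wishart g.2 j k * wishart g.2 l i))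
      ((gaussianMatrix κ₁ ι).prod (gaussianMatrix κ₂ ι)) := fun i j k l =>
    (integrable_wishart_apply_mul_wishart_apply i j k l).mul_prod
      (integrable_wishart_apply_mul_wishart_apply j k l i)
  have hfactor : ∀ i j k l : ι,
      ∫ g, wishart g.1 i j * wishart g.1 k l * (wishart g.2 j k * wishart g.2 l i)
        ∂((gaussianMatrix κ₁ ι).prod (gaussianMatrix κ₂ ι)) =
      (∫ g, wishart g i j * wishart g k l ∂(gaussianMatrix κ₁ ι)) *
        ∫ g, wishart g j k * wishart g l i ∂(gaussianMatrix κ₂ ι) := fun i j k l =>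
    integral_prod_mul (fun g : κ₁ → ι → ℝ => wishart g i j * wishart g k l)
      (fun g : κ₂ → ι → ℝ => wishart g j k * wishart g l i)
  rw [integral_trace_mul_mul_mul_eq_sum ((gaussianMatrix κ₁ ι).prod (gaussianMatrix κ₂ ι))
    (fun g => wishart g.1) (fun g => wishart g.2) (fun g => wishart g.1) (fun g => wishart g.2)
    hint]
  simp only [hfactor, integral_wishart_apply_mul_wishart_apply]
  exact sum_wishartSecondMoment_mul_wishartSecondMoment _ _

theorem wishart_product_fourth_trace_general (d : ℕ) :
    ∫ g : (Fin d → Fin d → ℝ) × (Fin d → Fin d → ℝ),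
        ((Matrix.of g.1)ᵀ * Matrix.of g.1 * ((Matrix.of g.2)ᵀ * Matrix.of g.2) *
          ((Matrix.of g.1)ᵀ * Matrix.of g.1) *
          ((Matrix.of g.2)ᵀ * Matrix.of g.2)).trace
        ∂((Measure.pi fun _ : Fin d =>
              Measure.pi fun _ : Fin d => gaussianReal 0 1).prod
          (Measure.pi fun _ : Fin d =>
              Measure.pi fun _ : Fin d => gaussianReal 0 1)) =
      3 * (d : ℝ) ^ 3 * ((d : ℝ) ^ 2 + (d : ℝ) + 1) := by
  have h := integral_trace_wishart_mul_wishart_mul_wishart_mul_wishart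
    (κ₁ := Fin d) (κ₂ := Fin d) (ι := Fin d)
  simp only [Fintype.card_fin] at h
  exact h.trans (by ring)

/-- **expected trace of the fourth power of a product of
independent Wishart matrices, β = 1.** Let `G₁ = g.1` and `G₂ = g.2` be
independent `d × d` matrices of i.i.d. standard Gaussians (joint law the
product of `2d²` standard Gaussians), and set `W₁ = G₁ᵀ G₁`, `W₂ = G₂ᵀ G₂`.
Then `E[Tr(W₁ W₂ W₁ W₂)] = 3 d³ (d² + d + 1)`. -/
theorem wishart_product_fourth_trace (d : ℕ) (hd : 0 < d) :
    ∫ g : (Fin d → Fin d → ℝ) × (Fin d → Fin d → ℝ),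
        ((Matrix.of g.1)ᵀ * Matrix.of g.1 * ((Matrix.of g.2)ᵀ * Matrix.of g.2) *
          ((Matrix.of g.1)ᵀ * Matrix.of g.1) *
          ((Matrix.of g.2)ᵀ * Matrix.of g.2)).trace
        ∂((Measure.pi fun _ : Fin d =>
              Measure.pi fun _ : Fin d => gaussianReal 0 1).prod
          (Measure.pi fun _ : Fin d =>
              Measure.pi fun _ : Fin d => gaussianReal 0 1)) =
      3 * (d : ℝ) ^ 3 * ((d : ℝ) ^ 2 + (d : ℝ) + 1) :=
  wishart_product_fourth_trace_general d
end
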